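/- arXiv:2504.20286 — 6 statements merged into one kernel-verified Lean document; each statement's English description precedes it below -/
import Mathlib

section
/- For every n ≥ 1, the number of occurrences of the letter B among the first n letters of the golden string S equals ⌊(n+1)/φ⌋, where φ = (1+√5)/2. -/
/-- The finite golden strings: `gs 1 = [B]`, `gs 2 = [B, A]`, `gs n = gs (n-1) ++ gs (n-2)`.
Here `true` denotes the letter B and `false` denotes the letter A. -/
def gs : ℕ → List Bool
  | 0 => []
  | 1 => [true]
  | 2 => [true, false]
  | (n+3) => gs (n+2) ++ gs (n+1)

/-- The `i`-th letter (1-indexed) of the infinite golden string `S`;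
`true` = B, `false` = A.  Since `gs n` is a prefix of `gs (n+1)` and
`(gs (i+1)).length = F (i+2) ≥ i`, this is well-defined. -/
def goldenLetter (i : ℕ) : Bool := (gs (i+1)).getD (i-1) true

/-- `s` is the (index set of the) Zeckendorf decomposition of `n`:
a set of indices `≥ 2`, no two adjacent, with `n = ∑_{i ∈ s} F i`. -/
def IsZeck (n : ℕ) (s : Finset ℕ) : Prop :=
  (∀ i ∈ s, 2 ≤ i) ∧ (∀ i ∈ s, i + 1 ∉ s) ∧ n = ∑ i ∈ s, Nat.fib i

/-- `c` is the coefficient function of the Chung–Graham decomposition of `n`: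
`n = ∑_{i ≥ 1} c i * F (2i)` with `c i ∈ {0,1,2}` and a coefficient `0`
strictly between any two coefficients equal to `2`. -/
def IsCG (n : ℕ) (c : ℕ →₀ ℕ) : Prop :=
  (∀ i, c i ≤ 2) ∧ c 0 = 0 ∧
  (∀ i₁ i₂, i₁ < i₂ → c i₁ = 2 → c i₂ = 2 → ∃ j, i₁ < j ∧ j < i₂ ∧ c j = 0) ∧
  n = c.sum (fun i a => a * Nat.fib (2 * i))

/-- `n` has `F (2k)` as the smallest summand of its Zeckendorf decomposition. -/
def ZeckMin (k n : ℕ) : Prop :=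
  ∃ s : Finset ℕ, IsZeck n s ∧ 2 * k ∈ s ∧ ∀ i ∈ s, 2 * k ≤ i

/-- `n` has `F (2k)` or `2 F (2k)` as the smallest summand of its
Chung–Graham decomposition. -/
def CGMin (k n : ℕ) : Prop :=
  ∃ c : ℕ →₀ ℕ, IsCG n c ∧ 1 ≤ c k ∧ ∀ i < k, c i = 0

/-! The golden string is the fixed point of the substitution `σ : B ↦ BA, A ↦ B`. Reading `S` as
the concatenation of the blocks `σ(S_j)`, each block contains exactly one `B`, at its start, and the
block of `S_{j+1}` starts right after position `j + b(j)`, where `b(n)` is the number of `B`'s among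
the first `n` letters. Hence `b(n) = #{j < n | j + b(j) < n}`, a recursion that determines `b`.
The function `n ↦ ⌊(n + 1)/φ⌋` satisfies it too: since `φ = 1 + 1/φ`, the condition
`j + ⌊(j + 1)/φ⌋ < n` says `⌊(j + 1)φ⌋ ≤ n`, i.e. `j + 1 < (n + 1)/φ`, and since `(n + 1)/φ` is
irrational exactly `⌊(n + 1)/φ⌋` values of `j` satisfy it. -/

open Finset Real
open scoped goldenRatio

def goldenSubst : Bool → List Bool
  | true => [true, false]
  | false => [true]

lemma gs_add_two_eq_flatMap (n : ℕ) : gs (n + 2) = (gs (n + 1)).flatMap goldenSubst := by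
  induction n using Nat.twoStepInduction with
  | zero => rfl
  | one => rfl
  | more n ih₁ ih₂ =>
    calc gs (n + 4) = gs (n + 3) ++ gs (n + 2) := rfl
      _ = (gs (n + 2)).flatMap goldenSubst ++ (gs (n + 1)).flatMap goldenSubst := by
        rw [← ih₁, ← ih₂]
      _ = (gs (n + 3)).flatMap goldenSubst := List.flatMap_append.symm

-- The block of `w[j]` starts at position `j + (w.take j).count true` and carries the only `B`
-- of the block.
lemma count_take_flatMap_goldenSubst (w : List Bool) (n : ℕ) :
    ((w.flatMap goldenSubst).take n).count true =
      #{j ∈ range w.length | j + (w.take j).count true < n} := by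
  induction w generalizing n with
  | nil => simp
  | cons a w ih =>
    have head : ((goldenSubst a).take n).count true = if 0 < n then 1 else 0 := by
      cases a <;> rcases n with _ | _ | n <;> simp [goldenSubst]
    have tail (j : ℕ) : j + 1 + ((a :: w).take (j + 1)).count true < n ↔
        j + (w.take j).count true < n - (goldenSubst a).length := by
      cases a <;> simp [goldenSubst] <;> omega
    rw [List.flatMap_cons, List.take_append, List.count_append, ih, List.length_cons,
      card_filter, card_filter, sum_range_succ', head]
    simp only [tail, List.take_zero, List.count_nil, add_zero]
    ring

lemma lt_length_gs (n : ℕ) : n < (gs (n + 1)).length := by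
  induction n using Nat.twoStepInduction with
  | zero => decide
  | one => decide
  | more n ih₁ ih₂ =>
    change n + 1 < (gs (n + 2)).length at ih₂
    rw [show gs (n + 2 + 1) = gs (n + 2) ++ gs (n + 1) from rfl, List.length_append]
    omega

lemma gs_prefix_gs {m n : ℕ} (h : m ≤ n) : gs (m + 1) <+: gs (n + 1) := by
  induction n, h using Nat.le_induction with
  | base => exact List.prefix_rfl
  | succ n _ ih =>
    refine ih.trans ?_
    rcases n with _ | n
    · exact ⟨[false], rfl⟩
    · exact List.prefix_append _ _

lemma take_gs_of_le {m n : ℕ} (h : m ≤ n) : (gs (n + 1)).take m = (gs (m + 1)).take m := by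
  obtain ⟨t, ht⟩ := gs_prefix_gs h
  rw [← ht, List.take_append_of_le_length (lt_length_gs m).le]

/-- The number of `B`'s among the first `n` letters of `S` (`gs (n + 1)` has more than `n`
letters). -/
def goldenCount (n : ℕ) : ℕ := ((gs (n + 1)).take n).count true

lemma goldenCount_succ (n : ℕ) :
    goldenCount (n + 1) = goldenCount n + if goldenLetter (n + 1) = true then 1 else 0 := by
  have hlen : n < (gs (n + 2)).length := n.lt_succ_self.trans (lt_length_gs (n + 1))
  rw [goldenCount, goldenCount, ← take_gs_of_le n.le_succ, List.take_add_one, List.count_append,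
    goldenLetter, Nat.add_sub_cancel, List.getD_eq_getElem?_getD, List.getElem?_eq_getElem hlen]
  cases (gs (n + 2))[n] <;> rfl

lemma card_filter_goldenLetter (n : ℕ) :
    #{i ∈ Icc 1 n | goldenLetter i = true} = goldenCount n := by
  induction n with
  | zero => rfl
  | succ n ih =>
    rw [← insert_Icc_right_eq_Icc_add_one (by omega), filter_insert, goldenCount_succ, ← ih]
    split_ifs with h
    · exact card_insert_of_notMem (by simp)
    · rfl

lemma goldenCount_eq_card_filter (n : ℕ) :
    goldenCount n = #{j ∈ range n | j + goldenCount j < n} := by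
  have hlen := lt_length_gs n
  rw [goldenCount, ← take_gs_of_le n.le_succ, gs_add_two_eq_flatMap, count_take_flatMap_goldenSubst]
  congr 1
  ext j
  simp only [mem_filter, mem_range]
  constructor
  · rintro ⟨-, h⟩
    have hj : j < n := by omega
    rw [goldenCount, ← take_gs_of_le hj.le]
    exact ⟨hj, h⟩
  · rintro ⟨hj, h⟩
    rw [goldenCount, ← take_gs_of_le hj.le] at h
    exact ⟨by omega, h⟩

lemma Irrational.lt_natFloor_iff {x : ℝ} (hx : Irrational x) (k : ℕ) :
    k < ⌊x⌋₊ ↔ (k + 1 : ℝ) < x := by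
  rw [← Nat.add_one_le_iff, Nat.le_floor_iff' k.succ_ne_zero, Nat.cast_succ,
    le_iff_lt_or_eq, or_iff_left]
  exact_mod_cast (hx.ne_nat (k + 1)).symm

lemma add_floor_div_goldenRatio_lt_iff (j n : ℕ) :
    j + ⌊((j : ℝ) + 1) / φ⌋₊ < n ↔ ((j : ℝ) + 1) < (n + 1) / φ := by
  have hinv : φ⁻¹ = φ - 1 := by
    rw [inv_goldenRatio]; linarith [goldenRatio_add_goldenConj]
  rw [add_comm, ← Nat.floor_add_natCast (by positivity), Nat.floor_lt (by positivity),
    lt_div_iff₀ goldenRatio_pos, div_eq_mul_inv, hinv]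
  constructor <;> intro h <;> linarith

lemma floor_div_goldenRatio_eq_card_filter (n : ℕ) :
    ⌊((n : ℝ) + 1) / φ⌋₊ = #{j ∈ range n | j + ⌊(((j : ℕ) : ℝ) + 1) / φ⌋₊ < n} := by
  have hirr : Irrational (((n : ℝ) + 1) / φ) := by
    exact_mod_cast goldenRatio_irrational.natCast_div n.succ_ne_zero
  have hle : ⌊((n : ℝ) + 1) / φ⌋₊ ≤ n := by
    rw [← Nat.lt_add_one_iff, Nat.floor_lt (by positivity), div_lt_iff₀ goldenRatio_pos]
    push_cast
    nlinarith [Real.one_lt_goldenRatio]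
  rw [← card_range ⌊((n : ℝ) + 1) / φ⌋₊]
  congr 1
  ext j
  rw [mem_filter, mem_range, mem_range, add_floor_div_goldenRatio_lt_iff, ← hirr.lt_natFloor_iff]
  exact ⟨fun h => ⟨h.trans_le hle, h⟩, fun h => h.2⟩

lemma eq_of_card_filter_rec {f g : ℕ → ℕ} (hf : ∀ n, f n = #{j ∈ range n | j + f j < n})
    (hg : ∀ n, g n = #{j ∈ range n | j + g j < n}) : f = g := by
  funext n
  induction n using Nat.strong_induction_on with
  | _ n ih =>
    rw [hf, hg]
    congr 1
    exact filter_congr fun j hj => by rw [ih j (mem_range.1 hj)]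

lemma goldenCount_eq_floor (n : ℕ) : goldenCount n = ⌊((n : ℝ) + 1) / φ⌋₊ :=
  congrFun (eq_of_card_filter_rec goldenCount_eq_card_filter
    (fun n => floor_div_goldenRatio_eq_card_filter n)) n

theorem count_B_prefix_general (n : ℕ) :
    ((((Finset.Icc 1 n).filter (fun i => goldenLetter i = true)).card : ℤ)) =
      ⌊((n : ℝ) + 1) / ((1 + Real.sqrt 5) / 2)⌋ := by
  rw [card_filter_goldenLetter, goldenCount_eq_floor, Int.natCast_floor_eq_floor (by positivity)]

theorem count_B_prefix (n : ℕ) (hn : 1 ≤ n) :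
    ((((Finset.Icc 1 n).filter (fun i => goldenLetter i = true)).card : ℤ)) =
      ⌊((n : ℝ) + 1) / ((1 + Real.sqrt 5) / 2)⌋ :=
  count_B_prefix_general n
end

section
/- For every n ≥ 1, the F_{2n}-th letter of the golden string S is B, and the F_{2n+1}-th letter of S is A. -/
/-!
`S_{m+1}` is a prefix of `S` of length `F_{m+2}`, so the `F_{m+2}`-th letter of `S` is the last
letter of `S_{m+1}`. Since `S_{m+3} = S_{m+2} S_{m+1}`, the last letter of `S_{m+3}` is that of
`S_{m+1}`; starting from `S_1 = B` and `S_2 = BA`, it is B for even `m` and A for odd `m`.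
-/

theorem gs_succ_succ_succ (n : ℕ) : gs (n + 3) = gs (n + 2) ++ gs (n + 1) := rfl

theorem length_gs_succ : ∀ n, (gs (n + 1)).length = Nat.fib (n + 2)
  | 0 => rfl
  | 1 => rfl
  | n + 2 => by
    rw [gs_succ_succ_succ, List.length_append, length_gs_succ (n + 1), length_gs_succ n,
      Nat.fib_add_two (n := n + 2)]
    ac_rfl

theorem getLast?_gs_succ : ∀ n, (gs (n + 1)).getLast? = some (decide (Even n))
  | 0 => rfl
  | 1 => rfl
  | n + 2 => by
    rw [gs_succ_succ_succ, List.getLast?_append, getLast?_gs_succ n]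
    simp [Nat.even_add_one]

theorem gs_prefix_gs_succ : ∀ n, gs n <+: gs (n + 1)
  | 0 => List.nil_prefix
  | 1 => ⟨[false], rfl⟩
  | _ + 2 => List.prefix_append _ _

theorem gs_prefix_gs_of_le {m n : ℕ} (h : m ≤ n) : gs m <+: gs n := by
  induction n, h using Nat.le_induction with
  | base => exact List.prefix_refl _
  | succ n _ ih => exact ih.trans (gs_prefix_gs_succ n)

theorem goldenLetter_fib_add_two (m : ℕ) : goldenLetter (Nat.fib (m + 2)) = decide (Even m) := by
  set i := Nat.fib (m + 2)
  have hlen : (gs (m + 1)).length = i := length_gs_succ m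
  have hpos : 0 < i := Nat.fib_pos.mpr (by omega)
  obtain ⟨t, ht⟩ := gs_prefix_gs_of_le (show m + 1 ≤ i + 1 by linarith [Nat.le_fib_add_one (m + 2)])
  rw [goldenLetter, ← ht, List.getD_append _ _ _ _ (by omega), List.getD_eq_getElem?_getD,
    ← hlen, ← List.getLast?_eq_getElem?, getLast?_gs_succ]
  rfl

theorem golden_fib_letters (n : ℕ) (hn : 1 ≤ n) :
    goldenLetter (Nat.fib (2 * n)) = true ∧ goldenLetter (Nat.fib (2 * n + 1)) = false := by
  obtain ⟨k, rfl⟩ : ∃ k, n = k + 1 := ⟨n - 1, by omega⟩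
  rw [show 2 * (k + 1) = 2 * k + 2 by ring, show 2 * k + 2 + 1 = (2 * k + 1) + 2 by ring,
    goldenLetter_fib_add_two, goldenLetter_fib_add_two]
  simp
end

section
/- Fix k ≥ 1 and let p(j) denote the j-th smallest positive integer whose Zeckendorf decomposition has F_{2k} as its smallest summand. Then for ℓ ≥ 2, the integers n in this set with largest Zeckendorf summand F_{2k+ℓ} are exactly p(F_ℓ + 1), ..., p(F_{ℓ+1}), and for F_ℓ + 1 ≤ j ≤ F_{ℓ+1} one has p(j) = p(j − F_ℓ) + F_{2k+ℓ}. -/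
/-!
Shifting every Zeckendorf index of `m` up by `2k` (an index `i ≥ 2` becomes `i + 2k ≥ 2k + 2`)
and adding the summand `F (2k)` gives exactly the Zeckendorf decompositions with smallest summand
`F (2k)`. This map is strictly increasing, because the top summand of a Zeckendorf sum dominates
the rest, so it enumerates `A_{2k}`: `p (m + 1) = F (2k) + ∑_{i ∈ Z(m)} F (i + 2k)`, where `Z(m)`
is the Zeckendorf index set of `m`. The largest index of `p (m + 1)` is then `2k + ℓ` exactly when
`F ℓ ≤ m < F (ℓ + 1)`, and removing that top summand from `m` and from `p (m + 1)` gives the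
recursion.
-/

namespace List

theorem isZeckendorfRep_iff {l : List ℕ} :
    l.IsZeckendorfRep ↔ l.Pairwise (fun a b ↦ b + 2 ≤ a) ∧ ∀ a ∈ l, 2 ≤ a := by
  have : Trans (fun a b : ℕ ↦ b + 2 ≤ a) (fun a b ↦ b + 2 ≤ a) (fun a b ↦ b + 2 ≤ a) :=
    ⟨fun hab hbc ↦ by omega⟩
  simp [IsZeckendorfRep, isChain_iff_pairwise, pairwise_append]

theorem IsZeckendorfRep.map_add {l : List ℕ} (hl : l.IsZeckendorfRep) (L : ℕ) :
    (l.map (· + L)).IsZeckendorfRep := by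
  rw [isZeckendorfRep_iff] at hl ⊢
  exact ⟨pairwise_map.2 (hl.1.imp fun h ↦ by omega),
    by simpa using fun a ha ↦ (hl.2 a ha).trans (by omega)⟩

theorem IsZeckendorfRep.nodup {l : List ℕ} (hl : l.IsZeckendorfRep) : l.Nodup :=
  (isZeckendorfRep_iff.1 hl).1.imp fun h ↦ by omega

end List

namespace Nat

theorem fib_le_of_mem_zeckendorf {n i : ℕ} (hi : i ∈ zeckendorf n) : fib i ≤ n := by
  simpa using List.le_sum_of_mem (List.mem_map_of_mem (f := fib) hi)

theorem greatestFib_mem_zeckendorf {n : ℕ} (hn : n ≠ 0) : greatestFib n ∈ zeckendorf n := by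
  rw [zeckendorf_of_pos (pos_of_ne_zero hn)]
  exact List.mem_cons_self

theorem forall_mem_zeckendorf_le_iff {n ℓ : ℕ} :
    (∀ i ∈ zeckendorf n, i ≤ ℓ) ↔ n < fib (ℓ + 1) := by
  refine ⟨fun h ↦ ?_, fun h i hi ↦ ?_⟩
  · rcases eq_or_ne n 0 with rfl | hn
    · exact fib_pos.2 (succ_pos ℓ)
    · exact greatestFib_lt.1 (lt_succ_of_le (h _ (greatestFib_mem_zeckendorf hn)))
  · by_contra! hlt
    exact (fib_le_of_mem_zeckendorf hi).not_gt (h.trans_le (fib_mono hlt))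

theorem greatestFib_eq_iff {n ℓ : ℕ} : greatestFib n = ℓ ↔ fib ℓ ≤ n ∧ n < fib (ℓ + 1) := by
  rw [← le_greatestFib, ← greatestFib_lt]
  omega

theorem mem_zeckendorf_and_forall_le_iff {n ℓ : ℕ} (hℓ : ℓ ≠ 0) :
    (ℓ ∈ zeckendorf n ∧ ∀ i ∈ zeckendorf n, i ≤ ℓ) ↔ fib ℓ ≤ n ∧ n < fib (ℓ + 1) := by
  rw [forall_mem_zeckendorf_le_iff]
  refine ⟨fun h ↦ ⟨fib_le_of_mem_zeckendorf h.1, h.2⟩, fun h ↦ ⟨?_, h.2⟩⟩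
  have hn : n ≠ 0 := ((fib_pos.2 (pos_of_ne_zero hℓ)).trans_le h.1).ne'
  exact greatestFib_eq_iff.2 h ▸ greatestFib_mem_zeckendorf hn

theorem nth_eq_of_strictMono {p : ℕ → Prop} {f : ℕ → ℕ} (hf : StrictMono f)
    (hp : ∀ k, p k ↔ k ∈ Set.range f) (n : ℕ) : nth p n = f n := by
  have hinf : (Set.ofPred p).Infinite := by
    convert Set.infinite_range_of_injective hf.injective
    ext k
    exact hp k
  have := nth_comp_of_strictMono (n := n) hf (fun k ↦ (hp k).1) fun h ↦ absurd h hinf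
  simpa [(hp _).2 ⟨_, rfl⟩] using this.symm

end Nat

open Nat

theorem isZeck_iff_eq_zeckendorf_toFinset {n : ℕ} {s : Finset ℕ} :
    IsZeck n s ↔ s = (zeckendorf n).toFinset := by
  constructor
  · rintro ⟨hge, hsep, rfl⟩
    have hrep : (s.sort (· ≥ ·)).IsZeckendorfRep := by
      refine List.isZeckendorfRep_iff.2
        ⟨(s.sortedGT_sort).pairwise.imp_of_mem ?_, by simpa using hge⟩
      intro a b ha hb hab
      have : a ≠ b + 1 := fun h ↦ hsep b (by simpa using hb) (h ▸ by simpa using ha)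
      omega
    have hsum : ∑ i ∈ s, fib i = ((s.sort (· ≥ ·)).map fib).sum := by
      rw [← List.sum_toFinset _ (s.sort_nodup _), s.sort_toFinset]
    rw [hsum, zeckendorf_sum_fib hrep, s.sort_toFinset]
  · rintro rfl
    have hrep := List.isZeckendorfRep_iff.1 (isZeckendorfRep_zeckendorf n)
    refine ⟨by simpa using hrep.2, fun i hi hi' ↦ ?_, ?_⟩
    · let R : ℕ → ℕ → Prop := fun a b ↦ a ≠ b + 1 ∧ b ≠ a + 1
      have : Std.Symm R := ⟨fun _ _ h ↦ h.symm⟩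
      have hR : (zeckendorf n).Pairwise R := hrep.1.imp fun h ↦ by omega
      simp only [List.mem_toFinset] at hi hi'
      exact (hR.forall hi hi' (by omega)).2 rfl
    · rw [List.sum_toFinset _ (isZeckendorfRep_zeckendorf n).nodup, sum_zeckendorf_fib]

theorem IsZeck.erase {n a : ℕ} {s : Finset ℕ} (h : IsZeck n s) (ha : a ∈ s) :
    IsZeck (n - fib a) (s.erase a) := by
  obtain ⟨hge, hsep, rfl⟩ := h
  refine ⟨fun i hi ↦ hge i (Finset.mem_of_mem_erase hi),
    fun i hi hi' ↦ hsep i (Finset.mem_of_mem_erase hi) (Finset.mem_of_mem_erase hi'), ?_⟩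
  rw [← Finset.add_sum_erase s fib ha, Nat.add_sub_cancel_left]

namespace Nat

def fibShift (L n : ℕ) : ℕ := ((zeckendorf n).map fun i ↦ fib (i + L)).sum

variable {L n : ℕ}

theorem zeckendorf_fibShift : zeckendorf (fibShift L n) = (zeckendorf n).map (· + L) := by
  simpa [fibShift, Function.comp_def] using
    zeckendorf_sum_fib ((isZeckendorfRep_zeckendorf n).map_add L)

theorem fibShift_of_pos (hn : 0 < n) :
    fibShift L n = fib (greatestFib n + L) + fibShift L (n - fib (greatestFib n)) := by
  rw [fibShift, zeckendorf_of_pos hn, List.map_cons, List.sum_cons, fibShift]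

theorem fibShift_eq_fib_add {ℓ : ℕ} (hℓ : ℓ ≠ 0) (h₁ : fib ℓ ≤ n) (h₂ : n < fib (ℓ + 1)) :
    fibShift L n = fib (ℓ + L) + fibShift L (n - fib ℓ) := by
  have hn : 0 < n := (fib_pos.2 (pos_of_ne_zero hℓ)).trans_le h₁
  rw [fibShift_of_pos hn, greatestFib_eq_iff.2 ⟨h₁, h₂⟩]

theorem fibShift_lt_fib {ℓ : ℕ} (h : n < fib (ℓ + 1)) : fibShift L n < fib (ℓ + L + 1) := by
  rw [← forall_mem_zeckendorf_le_iff, zeckendorf_fibShift]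
  simpa using fun i hi ↦ forall_mem_zeckendorf_le_iff.2 h i hi

theorem fibShift_strictMono (L : ℕ) : StrictMono (fibShift L) := by
  intro m n hmn
  induction n using Nat.strong_induction_on generalizing m with
  | _ n ih =>
    rw [fibShift_of_pos (m.zero_le.trans_lt hmn)]
    rcases (greatestFib_mono hmn.le).lt_or_eq with hlt | heq
    · calc fibShift L m < fib (greatestFib m + L + 1) :=
            fibShift_lt_fib (lt_fib_greatestFib_add_one m)
        _ ≤ fib (greatestFib n + L) := fib_mono (by omega)
        _ ≤ _ := Nat.le_add_right _ _
    · have hm : 0 < m := greatestFib_pos.1 (heq ▸ greatestFib_pos.2 (m.zero_le.trans_lt hmn))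
      have hle : fib (greatestFib n) ≤ m := heq ▸ fib_greatestFib_le m
      have hfib : 0 < fib (greatestFib n) := fib_pos.2 (greatestFib_pos.2 (by omega))
      have := ih (n - fib (greatestFib n)) (by omega)
        (show m - fib (greatestFib n) < n - fib (greatestFib n) by omega)
      rw [fibShift_of_pos hm, heq]
      omega

theorem zeckendorf_fibShift_add_fib (hL : 2 ≤ L) :
    zeckendorf (fibShift L n + fib L) = (zeckendorf n).map (· + L) ++ [L] := by
  have hrep := List.isZeckendorfRep_iff.1 (isZeckendorfRep_zeckendorf n)
  have : ((zeckendorf n).map (· + L) ++ [L]).IsZeckendorfRep := by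
    refine List.isZeckendorfRep_iff.2 ⟨List.pairwise_append.2 ⟨?_, by simp, ?_⟩, ?_⟩
    · exact List.pairwise_map.2 (hrep.1.imp fun h ↦ by omega)
    · simpa using fun a ha ↦ by have := hrep.2 a ha; omega
    · intro a ha
      rcases List.mem_append.1 ha with ha | ha
      · obtain ⟨b, hb, rfl⟩ := List.mem_map.1 ha
        exact le_add_right_of_le (hrep.2 b hb)
      · exact (List.mem_singleton.1 ha) ▸ hL
  simpa [fibShift, Function.comp_def] using zeckendorf_sum_fib this

theorem exists_fibShift_eq (h : ∀ i ∈ zeckendorf n, L + 2 ≤ i) : ∃ m, fibShift L m = n := by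
  have hrep := List.isZeckendorfRep_iff.1 (isZeckendorfRep_zeckendorf n)
  have : ((zeckendorf n).map (· - L)).IsZeckendorfRep := by
    refine List.isZeckendorfRep_iff.2 ⟨List.pairwise_map.2 (hrep.1.imp_of_mem ?_), ?_⟩
    · intro a b _ hb hab
      have := h b hb
      omega
    · simpa using fun a ha ↦ by have := h a ha; omega
  refine ⟨(((zeckendorf n).map (· - L)).map fib).sum, ?_⟩
  rw [fibShift, zeckendorf_sum_fib this, List.map_map]
  conv_rhs => rw [← sum_zeckendorf_fib n]
  refine congrArg List.sum (List.map_congr_left fun i hi ↦ ?_)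
  have hLi : L ≤ i := by have := h i hi; omega
  rw [Function.comp_apply, Nat.sub_add_cancel hLi]

theorem mem_zeckendorf_and_forall_ge_iff (hL : 2 ≤ L) :
    (L ∈ zeckendorf n ∧ ∀ i ∈ zeckendorf n, L ≤ i) ↔ ∃ m, fibShift L m + fib L = n := by
  constructor
  · rintro ⟨hLn, hmin⟩
    have hZ : IsZeck n (zeckendorf n).toFinset := isZeck_iff_eq_zeckendorf_toFinset.2 rfl
    have hrest := isZeck_iff_eq_zeckendorf_toFinset.1 (hZ.erase (List.mem_toFinset.2 hLn))
    obtain ⟨m, hm⟩ := exists_fibShift_eq (L := L) (n := n - fib L) fun i hi ↦ by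
      obtain ⟨hiL, hi⟩ := Finset.mem_erase.1 (hrest ▸ List.mem_toFinset.2 hi)
      have hiL' : i ≠ L + 1 := fun h ↦ hZ.2.1 L (List.mem_toFinset.2 hLn) (h ▸ hi)
      have := hmin i (List.mem_toFinset.1 hi)
      omega
    have := fib_le_of_mem_zeckendorf hLn
    exact ⟨m, by omega⟩
  · rintro ⟨m, rfl⟩
    rw [zeckendorf_fibShift_add_fib hL]
    simp only [List.mem_append, List.mem_map, List.mem_singleton, or_true, true_and]
    rintro i (⟨a, -, rfl⟩ | rfl) <;> omega

theorem mem_zeckendorf_fibShift_add_fib_and_forall_le_iff {m ℓ : ℕ} (hL : 2 ≤ L)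
    (hℓ : ℓ ≠ 0) :
    (L + ℓ ∈ zeckendorf (fibShift L m + fib L) ∧
      ∀ i ∈ zeckendorf (fibShift L m + fib L), i ≤ L + ℓ) ↔ fib ℓ ≤ m ∧ m < fib (ℓ + 1) := by
  rw [zeckendorf_fibShift_add_fib hL, ← mem_zeckendorf_and_forall_le_iff hℓ]
  simp [hℓ, or_imp, forall_and, add_comm L]

end Nat

theorem zeckMin_iff_zeckendorf {k n : ℕ} :
    ZeckMin k n ↔ 2 * k ∈ zeckendorf n ∧ ∀ i ∈ zeckendorf n, 2 * k ≤ i := by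
  simp only [ZeckMin, isZeck_iff_eq_zeckendorf_toFinset, exists_eq_left, List.mem_toFinset]

theorem nth_zeckMin {k : ℕ} (hk : 1 ≤ k) (m : ℕ) :
    Nat.nth (ZeckMin k) m = fibShift (2 * k) m + fib (2 * k) :=
  nth_eq_of_strictMono ((fibShift_strictMono _).add_const _)
    (fun _ ↦ zeckMin_iff_zeckendorf.trans (mem_zeckendorf_and_forall_ge_iff (by omega))) m

theorem zeck_table_recursion (k : ℕ) (hk : 1 ≤ k) (ℓ : ℕ) (hℓ : 2 ≤ ℓ) :
    (∀ n : ℕ,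
        (∃ s : Finset ℕ, IsZeck n s ∧ 2 * k ∈ s ∧ (∀ i ∈ s, 2 * k ≤ i) ∧
            2 * k + ℓ ∈ s ∧ ∀ i ∈ s, i ≤ 2 * k + ℓ) ↔
        ∃ j : ℕ, Nat.fib ℓ + 1 ≤ j ∧ j ≤ Nat.fib (ℓ + 1) ∧
          n = Nat.nth (ZeckMin k) (j - 1)) ∧
    (∀ j : ℕ, Nat.fib ℓ + 1 ≤ j → j ≤ Nat.fib (ℓ + 1) →
        Nat.nth (ZeckMin k) (j - 1) =
          Nat.nth (ZeckMin k) (j - Nat.fib ℓ - 1) + Nat.fib (2 * k + ℓ)) := by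
  have hL : 2 ≤ 2 * k := by omega
  refine ⟨fun n ↦ ?_, fun j hj₁ hj₂ ↦ ?_⟩
  · simp only [isZeck_iff_eq_zeckendorf_toFinset, exists_eq_left, List.mem_toFinset,
      nth_zeckMin hk]
    constructor
    · rintro ⟨hmin₁, hmin₂, htop⟩
      obtain ⟨m, rfl⟩ := (mem_zeckendorf_and_forall_ge_iff hL).1 ⟨hmin₁, hmin₂⟩
      have := (mem_zeckendorf_fibShift_add_fib_and_forall_le_iff hL (by omega)).1 htop
      exact ⟨m + 1, by omega, by omega, rfl⟩
    · rintro ⟨j, hj₁, hj₂, rfl⟩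
      obtain ⟨hmin₁, hmin₂⟩ := (mem_zeckendorf_and_forall_ge_iff hL).2 ⟨j - 1, rfl⟩
      exact ⟨hmin₁, hmin₂,
        (mem_zeckendorf_fibShift_add_fib_and_forall_le_iff hL (by omega)).2 ⟨by omega, by omega⟩⟩
  · rw [nth_zeckMin hk, nth_zeckMin hk,
      fibShift_eq_fib_add (ℓ := ℓ) (by omega) (by omega) (by omega),
      show j - 1 - fib ℓ = j - fib ℓ - 1 by omega, add_comm ℓ]
    ring
end

section
/- Fix k ≥ 1 and let q(j) be the j-th smallest positive integer whose Chung-Graham decomposition has F_{2k} (with coefficient 1 or 2) as its smallest summand. Then for ℓ ≥ 1: (a) for F_{2ℓ+1} + 1 ≤ j ≤ 2F_{2ℓ+1}, q(j) = q(j − F_{2ℓ+1}) + F_{2k+2ℓ}; (b) for 2F_{2ℓ+1} + 1 ≤ j ≤ F_{2ℓ+3}, q(j) = q(j − 2F_{2ℓ+1}) + 2F_{2k+2ℓ}. -/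
open Nat

def cgValue (c : ℕ →₀ ℕ) : ℕ := c.sum fun i a => a * fib (2 * i)

/-- Setting the coefficient at index `r` to `2` keeps the Chung–Graham gap condition. -/
def AdmitsTwoAt (c : ℕ →₀ ℕ) (r : ℕ) : Prop :=
  ∀ i, c i = 2 → ∃ j, i < j ∧ j < r ∧ c j = 0

lemma cgValue_update (c : ℕ →₀ ℕ) (a v : ℕ) :
    cgValue (c.update a v) = v * fib (2 * a) + cgValue (c.erase a) := by
  rw [cgValue, Finsupp.update_eq_single_add_erase,
    Finsupp.sum_add_index' (fun _ => zero_mul _) (fun _ _ _ => add_mul _ _ _),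
    Finsupp.sum_single_index (zero_mul _)]
  rfl

lemma cgValue_eq_add_erase (c : ℕ →₀ ℕ) (a : ℕ) :
    cgValue c = c a * fib (2 * a) + cgValue (c.erase a) := by
  simpa only [Finsupp.update_self] using cgValue_update c a (c a)

/-- Uses `2 F (2i) ≥ F (2i + 1)` and `F (2r) + F (2r - 1) = F (2r + 1)`. -/
lemma fib_le_cgValue {c : ℕ →₀ ℕ} {i r : ℕ} (hi : 1 ≤ i) (hci : c i = 2) (hir : i < r)
    (hc : ∀ j, i < j → j < r → c j ≠ 0) : fib (2 * r - 1) ≤ cgValue c := by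
  induction r, hir using Nat.le_induction generalizing c with
  | base =>
    have hsplit := cgValue_eq_add_erase c i
    have hfib := fib_add_one (n := 2 * i) (by omega)
    have hmono : fib (2 * i - 1) ≤ fib (2 * i) := fib_mono (by omega)
    rw [hci] at hsplit
    rw [show 2 * (i + 1) - 1 = 2 * i + 1 by omega]
    omega
  | succ r hir ih =>
    have herase := ih (c := c.erase r) (by rwa [Finsupp.erase_ne (by omega)])
      fun j hij hjr => by rw [Finsupp.erase_ne (by omega)]; exact hc j hij (by omega)
    have hsplit := cgValue_eq_add_erase c r
    have hfib := fib_add_one (n := 2 * r) (by omega)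
    have hcr : fib (2 * r) ≤ c r * fib (2 * r) :=
      Nat.le_mul_of_pos_left _ (Nat.pos_of_ne_zero (hc r (by omega) (by omega)))
    rw [show 2 * (r + 1) - 1 = 2 * r + 1 by omega]
    omega

lemma admitsTwoAt_erase {c : ℕ →₀ ℕ} {r : ℕ}
    (h : ∀ i ≠ r, c i = 2 → ∃ j, i < j ∧ j < r ∧ c j = 0) : AdmitsTwoAt (c.erase r) r := by
  intro i hi
  have hir : i ≠ r := by rintro rfl; simp at hi
  rw [Finsupp.erase_ne hir] at hi
  obtain ⟨j, hij, hjr, hj⟩ := h i hir hi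
  exact ⟨j, hij, hjr, by rwa [Finsupp.erase_ne hjr.ne]⟩

namespace IsCG

variable {n : ℕ} {c : ℕ →₀ ℕ}

lemma eq_cgValue (h : IsCG n c) : n = cgValue c := h.2.2.2

lemma erase (h : IsCG n c) (a : ℕ) : IsCG (cgValue (c.erase a)) (c.erase a) := by
  classical
  obtain ⟨hle, h0, hgap, -⟩ := h
  refine ⟨fun i => ?_, ?_, fun i₁ i₂ hlt h₁ h₂ => ?_, rfl⟩
  · rw [Finsupp.erase_apply]; split_ifs <;> simp [hle]
  · rw [Finsupp.erase_apply]; split_ifs <;> simp [h0]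
  · rw [Finsupp.erase_apply] at h₁ h₂
    split_ifs at h₁ h₂
    obtain ⟨j, hj₁, hj₂, hj⟩ := hgap i₁ i₂ hlt h₁ h₂
    exact ⟨j, hj₁, hj₂, by rw [Finsupp.erase_apply]; split_ifs <;> simp [hj]⟩

lemma update {a v : ℕ} (h : IsCG n c) (ha : 1 ≤ a) (hc : ∀ i, a ≤ i → c i = 0) (hv : v ≤ 2)
    (h2 : v = 2 → AdmitsTwoAt c a) : IsCG (v * fib (2 * a) + n) (c.update a v) := by
  classical
  obtain ⟨hle, h0, hgap, hn⟩ := h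
  have hlt : ∀ i, c i = 2 → i < a := fun i hi => by
    by_contra! hai
    simp [hc i hai] at hi
  refine ⟨fun i => ?_, ?_, fun i₁ i₂ hi h₁ h₂ => ?_, ?_⟩
  · rw [Finsupp.update_apply]; split_ifs <;> simp [hle, hv]
  · rw [Finsupp.update_apply, if_neg (by omega), h0]
  · rw [Finsupp.update_apply] at h₁ h₂
    split_ifs at h₁ h₂ with e₁ e₂ e₂
    · omega
    · exact absurd (hlt i₂ h₂) (by omega)
    · obtain ⟨j, hj₁, hj₂, hj⟩ := h2 h₂ i₁ h₁
      exact ⟨j, hj₁, by omega, by rw [Finsupp.update_apply, if_neg (by omega), hj]⟩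
    · obtain ⟨j, hj₁, hj₂, hj⟩ := hgap i₁ i₂ hi h₁ h₂
      have := hlt i₂ h₂
      exact ⟨j, hj₁, hj₂, by rw [Finsupp.update_apply, if_neg (by omega), hj]⟩
  · change _ = cgValue _
    rw [cgValue_update, Finsupp.erase_of_notMem_support (by simpa using hc a le_rfl), hn]
    rfl

lemma apply_eq_zero (h : IsCG n c) {r : ℕ} (hn : n < fib (2 * r)) {i : ℕ} (hi : r ≤ i) :
    c i = 0 := by
  by_contra hne
  have hsplit := cgValue_eq_add_erase c i
  have hmono : fib (2 * r) ≤ fib (2 * i) := fib_mono (by omega)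
  have hci : fib (2 * i) ≤ c i * fib (2 * i) := Nat.le_mul_of_pos_left _ (Nat.pos_of_ne_zero hne)
  have := h.eq_cgValue
  omega

/-- The second conjunct is the induction hypothesis needed when the top coefficient is `2`. -/
lemma lt_fib (h : IsCG n c) {r : ℕ} (hr : 1 ≤ r) (hc : ∀ i, r ≤ i → c i = 0) :
    n < fib (2 * r) ∧ (AdmitsTwoAt c r → n < fib (2 * r - 1)) := by
  induction r, hr using Nat.le_induction generalizing n c with
  | base =>
    have hzero : c = 0 := Finsupp.ext fun i => by
      rcases i with _ | i
      · exact h.2.1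
      · exact hc _ (by omega)
    subst hzero
    simp [h.eq_cgValue, cgValue]
  | succ r hr ih =>
    have hd : ∀ i, r ≤ i → c.erase r i = 0 := fun i hi => by
      rcases hi.eq_or_lt with rfl | hi
      · exact Finsupp.erase_same
      · rw [Finsupp.erase_ne hi.ne']; exact hc i hi
    obtain ⟨hd₁, hd₂⟩ := ih (h.erase r) hd
    have hn : n = c r * fib (2 * r) + cgValue (c.erase r) :=
      h.eq_cgValue.trans (cgValue_eq_add_erase c r)
    have f₁ := fib_add_one (n := 2 * r) (by omega)
    have f₂ : fib (2 * r + 2) = fib (2 * r) + fib (2 * r + 1) := fib_add_two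
    rw [show 2 * (r + 1) = 2 * r + 2 by ring, show 2 * r + 2 - 1 = 2 * r + 1 by omega]
    obtain hcr | hcr | hcr : c r = 0 ∨ c r = 1 ∨ c r = 2 := by have := h.1 r; omega
    · rw [hcr] at hn; omega
    · refine ⟨by rw [hcr] at hn; omega, fun hadm => ?_⟩
      have := hd₂ <| admitsTwoAt_erase fun i _ hi => by
        obtain ⟨j, hij, hjr, hj⟩ := hadm i hi
        exact ⟨j, hij, by grind, hj⟩
      rw [hcr] at hn; omega
    · refine ⟨?_, fun hadm => by obtain ⟨j, _, _, _⟩ := hadm r hcr; omega⟩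
      have := hd₂ <| admitsTwoAt_erase fun i hir hi => by
        have : i < r := by
          by_contra!
          simp [hc i (by omega)] at hi
        exact h.2.2.1 i r this hi hcr
      rw [hcr] at hn; omega

lemma admitsTwoAt (h : IsCG n c) {r : ℕ} (hc : ∀ i, r ≤ i → c i = 0)
    (hn : n < fib (2 * r - 1)) : AdmitsTwoAt c r := by
  intro i hi
  by_contra! hgap
  have hir : i < r := by
    by_contra!
    simp [hc i this] at hi
  have hi₁ : 1 ≤ i := by
    by_contra!
    simp [show i = 0 by omega, h.2.1] at hi
  have := fib_le_cgValue hi₁ hi hir hgap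
  have := h.eq_cgValue
  omega

lemma erase_of_mul_fib_add {a v m : ℕ} (h : IsCG (v * fib (2 * a) + m) c) (ha : 1 ≤ a)
    (hv : v ≤ 2) (hm : m < fib (2 * a)) (hm₂ : v = 2 → m < fib (2 * a - 1)) :
    IsCG m (c.erase a) := by
  have f₁ := fib_add_one (n := 2 * a) (by omega)
  have f₂ : fib (2 * a + 2) = fib (2 * a) + fib (2 * a + 1) := fib_add_two
  have hval : v * fib (2 * a) + m < fib (2 * (a + 1)) := by
    rw [show 2 * (a + 1) = 2 * a + 2 by ring]
    obtain rfl | rfl | rfl : v = 0 ∨ v = 1 ∨ v = 2 := by omega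
    all_goals have := hm₂; omega
  have hd : ∀ i, a ≤ i → c.erase a i = 0 := fun i hi => by
    rcases hi.eq_or_lt with rfl | hi
    · exact Finsupp.erase_same
    · rw [Finsupp.erase_ne hi.ne']; exact h.apply_eq_zero hval hi
  have hd₁ := ((h.erase a).lt_fib ha hd).1
  have hsplit := h.eq_cgValue.trans (cgValue_eq_add_erase c a)
  have hca := h.1 a
  have hm' : cgValue (c.erase a) = m := by
    obtain hca | hca | hca : c a = 0 ∨ c a = 1 ∨ c a = 2 := by omega
    all_goals obtain rfl | rfl | rfl : v = 0 ∨ v = 1 ∨ v = 2 := by omega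
    all_goals rw [hca] at hsplit; omega
  exact hm' ▸ h.erase a

end IsCG

lemma cgMin_mul_fib_add_iff {k a v m : ℕ} (hka : k < a) (hv : v ≤ 2) (hm : m < fib (2 * a))
    (hm₂ : v = 2 → m < fib (2 * a - 1)) : CGMin k (v * fib (2 * a) + m) ↔ CGMin k m := by
  constructor
  · rintro ⟨c, hc, hck, hlow⟩
    refine ⟨c.erase a, hc.erase_of_mul_fib_add (by omega) hv hm hm₂, ?_, fun i hi => ?_⟩
    · rwa [Finsupp.erase_ne hka.ne]
    · rw [Finsupp.erase_ne (by omega)]; exact hlow i hi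
  · rintro ⟨c, hc, hck, hlow⟩
    have hca : ∀ i, a ≤ i → c i = 0 := fun i hi => hc.apply_eq_zero hm hi
    refine ⟨c.update a v, hc.update (by omega) hca hv fun h₂ => hc.admitsTwoAt hca (hm₂ h₂),
      ?_, fun i hi => ?_⟩
    · rwa [Finsupp.update_apply, if_neg hka.ne]
    · rw [Finsupp.update_apply, if_neg (by omega)]; exact hlow i hi

lemma cgMin_fib_add_iff {k a m : ℕ} (hka : k < a) (hm : m < fib (2 * a)) :
    CGMin k (fib (2 * a) + m) ↔ CGMin k m := by
  simpa using cgMin_mul_fib_add_iff (v := 1) hka (by norm_num) hm (by omega)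

lemma cgMin_two_mul_fib_add_iff {k a m : ℕ} (hka : k < a) (hm : m < fib (2 * a - 1)) :
    CGMin k (2 * fib (2 * a) + m) ↔ CGMin k m :=
  cgMin_mul_fib_add_iff hka le_rfl (hm.trans_le (fib_mono (by omega))) fun _ => hm

lemma cgMin_iff_of_lt_fib {k m : ℕ} (hk : 1 ≤ k) (hm : m < fib (2 * k + 2)) :
    CGMin k m ↔ m = fib (2 * k) ∨ m = 2 * fib (2 * k) := by
  constructor
  · rintro ⟨c, hc, hck, hlow⟩
    have hzero : c.erase k = 0 := Finsupp.ext fun i => by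
      rcases lt_trichotomy i k with hi | rfl | hi
      · rw [Finsupp.erase_ne hi.ne]; exact hlow i hi
      · exact Finsupp.erase_same
      · rw [Finsupp.erase_ne hi.ne']
        exact hc.apply_eq_zero (r := k + 1) (by rwa [mul_add]) hi
    have hm' := hc.eq_cgValue.trans (cgValue_eq_add_erase c k)
    rw [hzero, cgValue, Finsupp.sum_zero_index, add_zero] at hm'
    obtain hck | hck : c k = 1 ∨ c k = 2 := by have := hc.1 k; omega
    · left; rw [hm', hck, one_mul]
    · right; rw [hm', hck]
  · have hzero : IsCG 0 0 := ⟨by simp, rfl, by simp, rfl⟩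
    have hv {v : ℕ} (hv₁ : 1 ≤ v) (hv₂ : v ≤ 2) : CGMin k (v * fib (2 * k)) :=
      ⟨_, hzero.update hk (by simp) hv₂ (by simp [AdmitsTwoAt]),
        by simpa [Finsupp.update_apply] using hv₁,
        fun i hi => by simp [hi.ne]⟩
    rintro (rfl | rfl)
    · simpa using hv le_rfl (by norm_num)
    · exact hv (by norm_num) le_rfl

theorem Nat.count_add_of_forall_iff {p : ℕ → Prop} [DecidablePred p] {a N n : ℕ}
    (h : ∀ m < N, (p (a + m) ↔ p m)) (hn : n ≤ N) :
    count p (a + n) = count p a + count p n := by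
  rw [count_add, count_eq_card_filter_range (fun k => p (a + k)), count_eq_card_filter_range p n,
    Finset.filter_congr fun m hm => h m (by simp at hm; omega)]

theorem Nat.nth_count_add_of_forall_iff {p : ℕ → Prop} [DecidablePred p] {a N i : ℕ}
    (h : ∀ m < N, (p (a + m) ↔ p m)) (hi : i < count p N) :
    nth p (count p a + i) = a + nth p i := by
  have hlt : nth p i < N := nth_lt_of_lt_count hi
  have hcard : ∀ hf : (Set.ofPred p).Finite, i < hf.toFinset.card :=
    fun hf => hi.trans_le (count_le_card hf N)
  calc nth p (count p a + i) = nth p (count p a + count p (nth p i)) := by rw [count_nth hcard]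
    _ = nth p (count p (a + nth p i)) := by rw [count_add_of_forall_iff h hlt.le]
    _ = a + nth p i := nth_count ((h _ hlt).2 (nth_mem i hcard))

section Count

variable {k : ℕ} [DecidablePred (CGMin k)]

lemma count_cgMin_fib_add {a m : ℕ} (hka : k < a) (hm : m ≤ fib (2 * a)) :
    count (CGMin k) (fib (2 * a) + m) = count (CGMin k) (fib (2 * a)) + count (CGMin k) m :=
  count_add_of_forall_iff (fun _ => cgMin_fib_add_iff hka) hm

lemma count_cgMin_two_mul_fib_add {a m : ℕ} (hka : k < a) (hm : m ≤ fib (2 * a - 1)) :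
    count (CGMin k) (2 * fib (2 * a) + m) =
      count (CGMin k) (2 * fib (2 * a)) + count (CGMin k) m :=
  count_add_of_forall_iff (fun _ => cgMin_two_mul_fib_add_iff hka) hm

lemma count_cgMin_two_mul_fib {a : ℕ} (hka : k < a) :
    count (CGMin k) (2 * fib (2 * a)) = 2 * count (CGMin k) (fib (2 * a)) := by
  rw [two_mul, count_cgMin_fib_add hka le_rfl, ← two_mul]

lemma count_cgMin_fib_base (hk : 1 ≤ k) :
    count (CGMin k) (fib (2 * k + 1)) = 1 ∧ count (CGMin k) (fib (2 * k + 2)) = 2 := by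
  have f₁ := fib_add_one (n := 2 * k) (by omega)
  have f₂ : fib (2 * k + 2) = fib (2 * k) + fib (2 * k + 1) := fib_add_two
  have hmono : fib (2 * k - 1) ≤ fib (2 * k) := fib_mono (by omega)
  have hpos : 0 < fib (2 * k - 1) := fib_pos.2 (by omega)
  have hfilter {N : ℕ} (hN : N ≤ fib (2 * k + 2)) : (Finset.range N).filter (CGMin k) =
      ({fib (2 * k), 2 * fib (2 * k)} : Finset ℕ).filter (· < N) := by
    ext m
    simp only [Finset.mem_filter, Finset.mem_range, Finset.mem_insert, Finset.mem_singleton]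
    constructor
    · rintro ⟨hm, hcg⟩; exact ⟨(cgMin_iff_of_lt_fib hk (by omega)).1 hcg, hm⟩
    · rintro ⟨hcg, hm⟩; exact ⟨hm, (cgMin_iff_of_lt_fib hk (by omega)).2 hcg⟩
  simp only [count_eq_card_filter_range, hfilter le_rfl, hfilter (fib_le_fib_succ)]
  rw [Finset.filter_insert, Finset.filter_insert, Finset.filter_singleton,
    Finset.filter_singleton]
  simp only [show fib (2 * k) < fib (2 * k + 1) by omega, show ¬ 2 * fib (2 * k) < fib (2 * k + 1)
    by omega, show fib (2 * k) < fib (2 * k + 2) by omega,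
    show 2 * fib (2 * k) < fib (2 * k + 2) by omega]
  simp [Finset.card_pair (show fib (2 * k) ≠ 2 * fib (2 * k) by omega)]

lemma count_cgMin_fib (hk : 1 ≤ k) {t : ℕ} (ht : 1 ≤ t) :
    count (CGMin k) (fib (2 * (k + t) - 1)) = fib (2 * t) ∧
      count (CGMin k) (fib (2 * (k + t))) = fib (2 * t + 1) := by
  induction t, ht using Nat.le_induction with
  | base =>
    rw [show 2 * (k + 1) - 1 = 2 * k + 1 by omega, show 2 * (k + 1) = 2 * k + 2 by ring]
    exact count_cgMin_fib_base hk
  | succ t ht ih =>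
    obtain ⟨ih₁, ih₂⟩ := ih
    have hka : k < k + t := by omega
    have f₁ := fib_add_one (n := 2 * (k + t)) (by omega)
    have f₂ : fib (2 * (k + t) + 2) = fib (2 * (k + t)) + fib (2 * (k + t) + 1) := fib_add_two
    have g₁ : fib (2 * t + 2) = fib (2 * t) + fib (2 * t + 1) := fib_add_two
    have g₂ : fib (2 * t + 3) = fib (2 * t + 1) + fib (2 * t + 2) := fib_add_two
    have hmono : fib (2 * (k + t) - 1) ≤ fib (2 * (k + t)) := fib_mono (by omega)
    rw [show 2 * (k + (t + 1)) - 1 = 2 * (k + t) + 1 by omega,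
      show 2 * (k + (t + 1)) = 2 * (k + t) + 2 by ring, show 2 * (t + 1) = 2 * t + 2 by ring,
      show 2 * t + 2 + 1 = 2 * t + 3 by ring]
    constructor
    · rw [f₁, add_comm, count_cgMin_fib_add hka hmono, ih₁, ih₂, g₁, add_comm]
    · rw [f₂, f₁, show fib (2 * (k + t)) + (fib (2 * (k + t) - 1) + fib (2 * (k + t))) =
          2 * fib (2 * (k + t)) + fib (2 * (k + t) - 1) by ring,
        count_cgMin_two_mul_fib_add hka le_rfl, count_cgMin_two_mul_fib hka, ih₁, ih₂, g₂, g₁]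
      ring

end Count

theorem cg_table_recursion (k : ℕ) (hk : 1 ≤ k) (ℓ : ℕ) (hℓ : 1 ≤ ℓ) :
    (∀ j : ℕ, Nat.fib (2 * ℓ + 1) + 1 ≤ j → j ≤ 2 * Nat.fib (2 * ℓ + 1) →
        Nat.nth (CGMin k) (j - 1) =
          Nat.nth (CGMin k) (j - Nat.fib (2 * ℓ + 1) - 1) + Nat.fib (2 * k + 2 * ℓ)) ∧
    (∀ j : ℕ, 2 * Nat.fib (2 * ℓ + 1) + 1 ≤ j → j ≤ Nat.fib (2 * ℓ + 3) →
        Nat.nth (CGMin k) (j - 1) =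
          Nat.nth (CGMin k) (j - 2 * Nat.fib (2 * ℓ + 1) - 1) +
            2 * Nat.fib (2 * k + 2 * ℓ)) := by
  classical
  have hka : k < k + ℓ := by omega
  obtain ⟨hcount₁, hcount₂⟩ := count_cgMin_fib hk hℓ
  have hfib : fib (2 * ℓ + 3) = 2 * fib (2 * ℓ + 1) + fib (2 * ℓ) := by
    rw [show 2 * ℓ + 3 = 2 * ℓ + 1 + 2 by ring, fib_add_two, fib_add_two (n := 2 * ℓ)]; ring
  rw [show 2 * k + 2 * ℓ = 2 * (k + ℓ) by ring]
  constructor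
  · intro j hj₁ hj₂
    have := nth_count_add_of_forall_iff (fun _ => cgMin_fib_add_iff hka)
      (i := j - fib (2 * ℓ + 1) - 1) (by omega)
    rw [hcount₂, show fib (2 * ℓ + 1) + (j - fib (2 * ℓ + 1) - 1) = j - 1 by omega] at this
    rw [this, add_comm]
  · intro j hj₁ hj₂
    have := nth_count_add_of_forall_iff (fun _ => cgMin_two_mul_fib_add_iff hka)
      (i := j - 2 * fib (2 * ℓ + 1) - 1) (by omega)
    rw [count_cgMin_two_mul_fib hka, hcount₂,
      show 2 * fib (2 * ℓ + 1) + (j - 2 * fib (2 * ℓ + 1) - 1) = j - 1 by omega] at this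
    rw [this, add_comm]
end

section
/- Fix k ≥ 1 and let q(j) be the j-th smallest positive integer in B_{2k}. For ℓ ≥ 1, the F_{2ℓ+3}-th element satisfies q(F_{2ℓ+3}) = F_{2k} + F_{2k+2} + ⋯ + F_{2k+2ℓ−2} + 2F_{2k+2ℓ}. -/
/-!
The elements of `B_{2k}` below `F (2k + 2ℓ + 2)` are the values of the admissible Chung–Graham
digit strings `c_k, …, c_{k+ℓ}` with `c_k ≠ 0`. Admissibility is recognised by a two-state
automaton (is a `2` still waiting for a `0`?), which counts `F (2ℓ + 3)` such strings. Their values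
are distinct, since an admissible string is worth less than the weight of the next position, and
the largest one is that of `1, …, 1, 2`, the right-hand side. So that value is preceded by exactly
`F (2ℓ + 3) - 1` elements of `B_{2k}`.
-/

namespace ChungGraham

open Nat List

def SeparatedTwos (f : ℕ → ℕ) : Prop :=
  ∀ i₁ i₂, i₁ < i₂ → f i₁ = 2 → f i₂ = 2 → ∃ j, i₁ < j ∧ j < i₂ ∧ f j = 0

def ZeroBeforeTwos (f : ℕ → ℕ) : Prop :=
  ∀ i, f i = 2 → ∃ j < i, f j = 0

theorem separatedTwos_iff_succ {f : ℕ → ℕ} :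
    SeparatedTwos f ↔
      SeparatedTwos (fun i => f (i + 1)) ∧ (f 0 = 2 → ZeroBeforeTwos (fun i => f (i + 1))) := by
  constructor
  · intro h
    refine ⟨fun i₁ i₂ hi h₁ h₂ => ?_, fun h₀ i h₂ => ?_⟩
    · obtain ⟨_ | j, hj₁, hj₂, hj⟩ := h (i₁ + 1) (i₂ + 1) (by omega) h₁ h₂
      · omega
      · exact ⟨j, by omega, by omega, hj⟩
    · obtain ⟨_ | j, hj₁, hj₂, hj⟩ := h 0 (i + 1) (by omega) h₀ h₂
      · omega
      · exact ⟨j, by omega, hj⟩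
  · rintro ⟨hsucc, hzero⟩ (_ | i₁) (_ | i₂) hi h₁ h₂
    · omega
    · obtain ⟨j, hj, hj0⟩ := hzero h₁ i₂ h₂
      exact ⟨j + 1, by omega, by omega, hj0⟩
    · omega
    · obtain ⟨j, hj₁, hj₂, hj⟩ := hsucc i₁ i₂ (by omega) h₁ h₂
      exact ⟨j + 1, by omega, by omega, hj⟩

theorem zeroBeforeTwos_iff_succ {f : ℕ → ℕ} :
    ZeroBeforeTwos f ↔ f 0 = 0 ∨ f 0 ≠ 2 ∧ ZeroBeforeTwos (fun i => f (i + 1)) := by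
  constructor
  · intro h
    by_cases h₀ : f 0 = 0
    · exact Or.inl h₀
    refine Or.inr ⟨fun h₂ => by simpa using h 0 h₂, fun i h₂ => ?_⟩
    obtain ⟨j, hj, hj0⟩ := h (i + 1) h₂
    obtain _ | j := j
    · exact absurd hj0 h₀
    · exact ⟨j, by omega, hj0⟩
  · rintro (h₀ | ⟨h₀, h⟩) (_ | i) h₂
    · omega
    · exact ⟨0, by omega, h₀⟩
    · exact absurd h₂ h₀
    · obtain ⟨j, hj, hj0⟩ := h i h₂
      exact ⟨j + 1, by omega, hj0⟩

/-- Admissible Chung–Graham digit strings, least significant digit first; the flag `b` records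
that a `2` has been read since the last `0`. -/
def Admissible : Bool → List ℕ → Prop
  | _, [] => True
  | _, 0 :: l => Admissible false l
  | b, 1 :: l => Admissible b l
  | b, 2 :: l => b = false ∧ Admissible true l
  | _, (_ + 3) :: _ => False

theorem admissible_iff {b : Bool} {l : List ℕ} :
    Admissible b l ↔ (∀ i, l.getD i 0 ≤ 2) ∧ SeparatedTwos (l.getD · 0) ∧
      (b = true → ZeroBeforeTwos (l.getD · 0)) := by
  induction l generalizing b with
  | nil => simp [Admissible, SeparatedTwos, ZeroBeforeTwos]
  | cons d l ih =>
    have forall_iff {P : ℕ → Prop} : (∀ i, P i) ↔ P 0 ∧ ∀ i, P (i + 1) :=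
      ⟨fun h => ⟨h 0, fun i => h (i + 1)⟩, fun h i => i.casesOn h.1 h.2⟩
    rw [forall_iff, separatedTwos_iff_succ, zeroBeforeTwos_iff_succ (f := ((d :: l).getD · 0))]
    simp only [getD_cons_zero, getD_cons_succ]
    rcases d with _ | _ | _ | d <;> cases b <;> simp [Admissible, ih]

theorem Admissible.of_append {b : Bool} {l₁ l₂ : List ℕ} (h : Admissible b (l₁ ++ l₂)) :
    Admissible b l₁ := by
  induction l₁ generalizing b with
  | nil => trivial
  | cons d l ih =>
    rcases d with _ | _ | _ | d
    · exact ih h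
    · exact ih h
    · exact ⟨h.1, ih h.2⟩
    · exact h

theorem admissible_replicate_zero_append {k : ℕ} (hk : k ≠ 0) {b : Bool} {l : List ℕ} :
    Admissible b (replicate k 0 ++ l) ↔ Admissible false l := by
  obtain ⟨k, rfl⟩ := Nat.exists_eq_succ_of_ne_zero hk
  clear hk
  induction k generalizing b with
  | zero => rfl
  | succ k ih => exact ih (b := false)

def fibValue (n : ℕ) : List ℕ → ℕ
  | [] => 0
  | d :: l => d * fib n + fibValue (n + 2) l

theorem fibValue_append (n : ℕ) (l₁ l₂ : List ℕ) :
    fibValue n (l₁ ++ l₂) = fibValue n l₁ + fibValue (n + 2 * l₁.length) l₂ := by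
  induction l₁ generalizing n with
  | nil => simp [fibValue]
  | cons d l ih =>
    simp only [cons_append, fibValue, ih, length_cons]
    ring_nf

theorem fibValue_replicate_zero (n k : ℕ) : fibValue n (replicate k 0) = 0 := by
  induction k generalizing n with
  | zero => rfl
  | succ k ih => simp [fibValue, replicate_succ, ih]

theorem fibValue_eq_sum (n : ℕ) (l : List ℕ) :
    fibValue n l = ∑ i ∈ Finset.range l.length, l.getD i 0 * fib (n + 2 * i) := by
  induction l generalizing n with
  | nil => rfl
  | cons d l ih =>
    rw [fibValue, ih, length_cons, Finset.sum_range_succ']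
    simp only [getD_cons_succ, getD_cons_zero]
    ring_nf

theorem fibValue_add_fib_le {b : Bool} {l : List ℕ} (h : Admissible b l) (n : ℕ) :
    fibValue (n + 1) l + fib (n + b.toNat) ≤ fib (n + 1 + 2 * l.length) := by
  induction l generalizing n b with
  | nil => cases b <;> simp [fibValue, fib_le_fib_succ]
  | cons d l ih =>
    have h₂ : fib (n + 2) = fib n + fib (n + 1) := fib_add_two
    have h₃ : fib (n + 2 + 1) = fib (n + 1) + fib (n + 2) := fib_add_two
    have hmono : fib n ≤ fib (n + 1) := fib_le_fib_succ
    have hmono' : fib (n + 1) ≤ fib (n + 2) := fib_le_fib_succ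
    rw [fibValue, length_cons, show n + 1 + 2 * (l.length + 1) = n + 2 + 1 + 2 * l.length by ring,
      show n + 1 + 2 = n + 2 + 1 by ring]
    rcases d with _ | _ | _ | d
    · have := ih h (n + 2)
      cases b <;> simp only [Bool.toNat_false, Bool.toNat_true, add_zero] at this ⊢ <;> omega
    · have := ih h (n + 2)
      cases b <;> simp only [Bool.toNat_false, Bool.toNat_true, add_zero] at this ⊢ <;> omega
    · obtain ⟨rfl, h⟩ := h
      have := ih h (n + 2)
      simp only [Bool.toNat_false, Bool.toNat_true, add_zero] at this ⊢
      omega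
    · exact h.elim

theorem fibValue_lt {b : Bool} {l : List ℕ} (h : Admissible b l) {n : ℕ} (hn : 2 ≤ n) :
    fibValue n l < fib (n + 2 * l.length) := by
  obtain ⟨n, rfl⟩ : ∃ m, n = m + 1 + 1 := ⟨n - 2, by omega⟩
  have := fibValue_add_fib_le h (n + 1)
  have : 0 < fib (n + 1 + b.toNat) := fib_pos.2 (by omega)
  omega

theorem eq_and_eq_of_add_mul_eq {a b c d W : ℕ} (ha : a < W) (hb : b < W)
    (h : a + c * W = b + d * W) : a = b ∧ c = d := by
  have key (x y : ℕ) (hx : x < W) : (x + y * W) / W = y ∧ (x + y * W) % W = x :=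
    (Nat.div_mod_unique (by omega)).2 ⟨by ring, hx⟩
  obtain ⟨hc, ha'⟩ := key a c ha
  obtain ⟨hd, hb'⟩ := key b d hb
  rw [h] at hc ha'
  exact ⟨ha'.symm.trans hb', hc.symm.trans hd⟩

theorem eq_of_fibValue_eq {b₁ b₂ : Bool} {l₁ l₂ : List ℕ} {n : ℕ} (hn : 2 ≤ n)
    (h₁ : Admissible b₁ l₁) (h₂ : Admissible b₂ l₂) (hlen : l₁.length = l₂.length)
    (hval : fibValue n l₁ = fibValue n l₂) : l₁ = l₂ := by
  induction l₁ using List.reverseRecOn generalizing l₂ with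
  | nil => exact (List.length_eq_zero_iff.1 hlen.symm).symm
  | append_singleton t₁ d₁ ih =>
    obtain rfl | ⟨t₂, d₂, rfl⟩ := List.eq_nil_or_concat l₂
    · simp at hlen
    rw [concat_eq_append] at *
    simp only [length_append, length_singleton, Nat.add_right_cancel_iff] at hlen
    simp only [fibValue_append, fibValue, hlen, add_zero] at hval
    have hlt₁ := fibValue_lt h₁.of_append hn
    have hlt₂ := fibValue_lt h₂.of_append hn
    rw [hlen] at hlt₁
    obtain ⟨ht, rfl⟩ := eq_and_eq_of_add_mul_eq hlt₁ hlt₂ hval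
    rw [ih h₁.of_append h₂.of_append hlen ht]

theorem admissible_replicate_one_append_two (m : ℕ) :
    Admissible false (replicate m 1 ++ [2]) := by
  induction m with
  | zero => exact ⟨rfl, trivial⟩
  | succ m ih => exact ih

theorem fibValue_replicate_one_append_two (n m : ℕ) :
    fibValue n (replicate m 1 ++ [2]) =
      (∑ i ∈ Finset.range m, fib (n + 2 * i)) + 2 * fib (n + 2 * m) := by
  induction m generalizing n with
  | zero => simp [fibValue]
  | succ m ih =>
    rw [replicate_succ, cons_append, fibValue, ih, Finset.sum_range_succ']
    ring_nf

theorem fibValue_replicate_one_append_two_add_fib (n m : ℕ) :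
    fibValue (n + 1) (replicate m 1 ++ [2]) + fib n = fib (n + 1 + 2 * (m + 1)) := by
  induction m generalizing n with
  | zero =>
    simp only [replicate_zero, nil_append, fibValue]
    have := fib_add_two (n := n + 1)
    have := fib_add_two (n := n)
    ring_nf at *
    omega
  | succ m ih =>
    have := fib_add_two (n := n)
    rw [replicate_succ, cons_append, fibValue,
      show n + 1 + 2 * (m + 1 + 1) = n + 2 + 1 + 2 * (m + 1) by ring, ← ih (n + 2)]
    ring_nf at *
    omega

theorem fibValue_le_fibValue_replicate_one_append_two {b : Bool} {l : List ℕ} {n m : ℕ}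
    (hn : 1 ≤ n) (h : Admissible b l) (hlen : l.length = m + 1) :
    fibValue n l ≤ fibValue n (replicate m 1 ++ [2]) := by
  obtain ⟨n, rfl⟩ := Nat.exists_eq_add_of_le' hn
  have hle := fibValue_add_fib_le h n
  rw [hlen, ← fibValue_replicate_one_append_two_add_fib] at hle
  have : fib n ≤ fib (n + b.toNat) := fib_mono (by omega)
  omega

def admissibleStrings : Bool → ℕ → Finset (List ℕ)
  | _, 0 => {[]}
  | false, m + 1 =>
    (admissibleStrings false m).map ⟨cons 0, cons_injective⟩ ∪
      (admissibleStrings false m).map ⟨cons 1, cons_injective⟩ ∪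
      (admissibleStrings true m).map ⟨cons 2, cons_injective⟩
  | true, m + 1 =>
    (admissibleStrings false m).map ⟨cons 0, cons_injective⟩ ∪
      (admissibleStrings true m).map ⟨cons 1, cons_injective⟩

theorem mem_admissibleStrings {b : Bool} {m : ℕ} {l : List ℕ} :
    l ∈ admissibleStrings b m ↔ l.length = m ∧ Admissible b l := by
  induction m generalizing b l with
  | zero => cases l <;> simp [admissibleStrings, Admissible]
  | succ m ih =>
    rcases l with _ | ⟨_ | _ | _ | d, l⟩ <;> cases b <;> simp [admissibleStrings, Admissible, ih]

theorem card_admissibleStrings (m : ℕ) :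
    (admissibleStrings false m).card = fib (2 * m + 2) ∧
      (admissibleStrings true m).card = fib (2 * m + 1) := by
  induction m with
  | zero => simp [admissibleStrings]
  | succ m ih =>
    have h₁ : fib (2 * (m + 1) + 1) = fib (2 * m + 1) + fib (2 * m + 2) := fib_add_two
    have h₂ : fib (2 * (m + 1) + 2) = fib (2 * m + 2) + fib (2 * (m + 1) + 1) := fib_add_two
    rw [admissibleStrings, admissibleStrings, Finset.card_union_of_disjoint,
      Finset.card_union_of_disjoint, Finset.card_union_of_disjoint]
    · simp only [Finset.card_map, ih.1, ih.2]
      omega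
    all_goals simp only [Finset.disjoint_left, Finset.mem_union, Finset.mem_map]; aesop

def leadingStrings (m : ℕ) : Finset (List ℕ) :=
  (admissibleStrings false m).map ⟨cons 1, cons_injective⟩ ∪
    (admissibleStrings true m).map ⟨cons 2, cons_injective⟩

theorem mem_leadingStrings {m : ℕ} {l : List ℕ} :
    l ∈ leadingStrings m ↔ l.length = m + 1 ∧ Admissible false l ∧ 1 ≤ l.getD 0 0 := by
  rcases l with _ | ⟨_ | _ | _ | d, l⟩ <;> simp [leadingStrings, Admissible, mem_admissibleStrings]

theorem card_leadingStrings (m : ℕ) : (leadingStrings m).card = fib (2 * m + 3) := by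
  have : fib (2 * m + 3) = fib (2 * m + 1) + fib (2 * m + 2) := fib_add_two
  rw [leadingStrings, Finset.card_union_of_disjoint (by simp [Finset.disjoint_left]),
    Finset.card_map, Finset.card_map, (card_admissibleStrings m).1, (card_admissibleStrings m).2,
    this, add_comm]

theorem replicate_one_append_two_mem_leadingStrings (m : ℕ) :
    replicate m 1 ++ [2] ∈ leadingStrings m := by
  refine mem_leadingStrings.2 ⟨by simp, admissible_replicate_one_append_two m, ?_⟩
  cases m <;> simp

theorem injOn_fibValue_leadingStrings {n : ℕ} (hn : 2 ≤ n) (m : ℕ) :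
    Set.InjOn (fibValue n) (leadingStrings m) := by
  intro l₁ h₁ l₂ h₂
  obtain ⟨hlen₁, hadm₁, -⟩ := mem_leadingStrings.1 h₁
  obtain ⟨hlen₂, hadm₂, -⟩ := mem_leadingStrings.1 h₂
  exact eq_of_fibValue_eq hn hadm₁ hadm₂ (hlen₁.trans hlen₂.symm)

theorem isCG_toFinsupp_iff {x : ℕ} {l : List ℕ} :
    IsCG x l.toFinsupp ↔ Admissible false l ∧ l.getD 0 0 = 0 ∧ x = fibValue 0 l := by
  have hsum : l.toFinsupp.sum (fun i a => a * fib (2 * i)) = fibValue 0 l := by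
    rw [Finsupp.sum_of_support_subset _ (toFinsupp_support_subset l) _ (by simp), fibValue_eq_sum]
    simp
  rw [IsCG, admissible_iff, hsum]
  simp only [toFinsupp_apply, Bool.false_eq_true, false_implies, and_true]
  tauto

theorem getD_replicate_zero_append (k i : ℕ) (l : List ℕ) :
    (replicate k 0 ++ l).getD i 0 = if i < k then 0 else l.getD (i - k) 0 := by
  split_ifs with hi
  · rw [getD_append _ _ _ _ (by simpa using hi), getD_replicate _ hi]
  · rw [getD_append_right _ _ _ _ (by simpa using hi), length_replicate]

theorem cgMin_and_lt_iff {k m x : ℕ} (hk : 1 ≤ k) :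
    CGMin k x ∧ x < fib (2 * k + 2 * (m + 1)) ↔ ∃ l ∈ leadingStrings m, fibValue (2 * k) l = x := by
  have hvalue (l : List ℕ) : fibValue 0 (replicate k 0 ++ l) = fibValue (2 * k) l := by
    rw [fibValue_append, fibValue_replicate_zero, length_replicate, zero_add, zero_add]
  constructor
  · rintro ⟨⟨c, hcg, hck, hlow⟩, hx⟩
    have hhigh (i : ℕ) (hi : k + m + 1 ≤ i) : c i = 0 := by
      by_contra hci
      have hle : c i * fib (2 * i) ≤ x := hcg.2.2.2 ▸
        Finset.single_le_sum (f := fun j => c j * fib (2 * j)) (fun _ _ => Nat.zero_le _)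
          (Finsupp.mem_support_iff.2 hci)
      have : fib (2 * k + 2 * (m + 1)) ≤ fib (2 * i) := fib_mono (by omega)
      have : fib (2 * i) ≤ c i * fib (2 * i) := Nat.le_mul_of_pos_left _ (by omega)
      omega
    set l := (List.range (m + 1)).map (fun i => c (k + i))
    have hc : c = (replicate k 0 ++ l).toFinsupp := by
      ext i
      rw [toFinsupp_apply, getD_replicate_zero_append]
      split_ifs with hi
      · exact hlow i hi
      rcases lt_or_ge (i - k) (m + 1) with hi' | hi'
      · rw [getD_eq_getElem _ _ (by simpa [l] using hi')]
        simp [l, Nat.add_sub_cancel' (not_lt.1 hi)]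
      · rw [getD_eq_default _ _ (by simpa [l] using hi'), hhigh i (by omega)]
    rw [hc, isCG_toFinsupp_iff, admissible_replicate_zero_append (by omega), hvalue] at hcg
    refine ⟨l, mem_leadingStrings.2 ⟨by simp [l], hcg.1, ?_⟩, hcg.2.2.symm⟩
    simpa [l] using hck
  · rintro ⟨l, hl, rfl⟩
    obtain ⟨hlen, hadm, hhead⟩ := mem_leadingStrings.1 hl
    refine ⟨⟨(replicate k 0 ++ l).toFinsupp, ?_, ?_, fun i hi => ?_⟩, ?_⟩
    · rw [isCG_toFinsupp_iff, admissible_replicate_zero_append (by omega), hvalue]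
      exact ⟨hadm, by rw [getD_replicate_zero_append, if_pos (by omega)], rfl⟩
    · rwa [toFinsupp_apply, getD_replicate_zero_append, if_neg (lt_irrefl k), Nat.sub_self]
    · rw [toFinsupp_apply, getD_replicate_zero_append, if_pos hi]
    · simpa [hlen] using fibValue_lt hadm (n := 2 * k) (by omega)

end ChungGraham

open ChungGraham List

theorem cg_table_last_row_general (k : ℕ) (hk : 1 ≤ k) (ℓ : ℕ) :
    Nat.nth (CGMin k) (Nat.fib (2 * ℓ + 3) - 1) =
      (∑ i ∈ Finset.range ℓ, Nat.fib (2 * k + 2 * i)) + 2 * Nat.fib (2 * k + 2 * ℓ) := by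
  classical
  have htop := replicate_one_append_two_mem_leadingStrings ℓ
  set Q := fibValue (2 * k) (replicate ℓ 1 ++ [2])
  obtain ⟨hQ, hQlt⟩ := (cgMin_and_lt_iff hk).2 ⟨_, htop, rfl⟩
  have hfilter : (Finset.range Q).filter (CGMin k) =
      ((leadingStrings ℓ).image (fibValue (2 * k))).erase Q := by
    ext x
    simp only [Finset.mem_filter, Finset.mem_range, Finset.mem_erase, Finset.mem_image]
    constructor
    · rintro ⟨hxQ, hx⟩
      exact ⟨hxQ.ne, (cgMin_and_lt_iff hk).1 ⟨hx, hxQ.trans hQlt⟩⟩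
    · rintro ⟨hxQ, l, hl, rfl⟩
      obtain ⟨hlen, hadm, -⟩ := mem_leadingStrings.1 hl
      exact ⟨(fibValue_le_fibValue_replicate_one_append_two (by omega) hadm hlen).lt_of_ne hxQ,
        ((cgMin_and_lt_iff hk).2 ⟨l, hl, rfl⟩).1⟩
  have hcount : Nat.count (CGMin k) Q = Nat.fib (2 * ℓ + 3) - 1 := by
    rw [Nat.count_eq_card_filter_range, hfilter, Finset.card_erase_of_mem (Finset.mem_image_of_mem _ htop),
      Finset.card_image_of_injOn (injOn_fibValue_leadingStrings (by omega) ℓ), card_leadingStrings]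
  rw [← hcount, Nat.nth_count hQ, fibValue_replicate_one_append_two]

theorem cg_table_last_row (k : ℕ) (hk : 1 ≤ k) (ℓ : ℕ) (hℓ : 1 ≤ ℓ) :
    Nat.nth (CGMin k) (Nat.fib (2 * ℓ + 3) - 1) =
      (∑ i ∈ Finset.range ℓ, Nat.fib (2 * k + 2 * i)) + 2 * Nat.fib (2 * k + 2 * ℓ) :=
  cg_table_last_row_general k hk ℓ
end

section
/- Fix k ≥ 1. The set of positive integers n such that F_{2k} is the smallest summand in both the Zeckendorf decomposition and the Chung-Graham decomposition of n equals { nF_{2k} + ⌊(n−1)φ⌋ F_{2k+1} : n ∈ ℕ, n ≥ 1 }, where φ = (1+√5)/2. -/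
/-!
Let `ψ = 1 - φ` and `goldenGap n = fract (-φ n)`, which is `⌈φ n⌉ - φ n` for `n ≠ 0`.
From `F (i + 1) = φ F i + ψ ^ i`, a Zeckendorf decomposition `n = ∑_{i ∈ s} F i` yields the integer
`∑_{i ∈ s} F (i + 1) = φ n + ∑_{i ∈ s} ψ ^ i`, and a Chung–Graham decomposition yields the integer
`∑ c i F (2 i + 1) = φ n + ∑ c i ψ ^ (2 i)`. If the smallest index is `j`, resp. `k`, the error
term lies in `ψ ^ j • (-ψ, φ)`, resp. `ψ ^ (2 k) • [1, φ ^ 2)`; in the cases at hand it is within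
distance `1` of `goldenGap n`, hence equal to it, and these ranges are disjoint for distinct `j`,
resp. `k`. So `F (2 k)` is the smallest summand of both decompositions iff
`goldenGap n ∈ ψ ^ (2 k) • [1, φ)`. Cassini's identity lets us write `n = m F (2 k) + p F (2 k + 1)`
with `m, p ∈ ℤ`; then `goldenGap n = ψ ^ (2 k) (m + p ψ)`, and `m + p ψ ∈ [1, φ)` forces
`m ≥ 1`, `p ≥ 0` and says exactly `p = ⌊(m - 1) φ⌋`.
-/

open scoped goldenRatio
open Real Set

theorem eq_of_pow_mul_eq_pow_mul {K : Type*} [Field K] [LinearOrder K] [IsStrictOrderedRing K]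
    {r t u : K} {a b : ℕ} (hr : 0 < r) (ht : t ∈ Ico 1 r⁻¹) (hu : u ∈ Ico 1 r⁻¹)
    (h : r ^ a * t = r ^ b * u) : a = b := by
  wlog hab : a ≤ b generalizing a b t u
  · exact (this hu ht h.symm (by omega)).symm
  obtain ⟨d, rfl⟩ := Nat.exists_eq_add_of_le hab
  rw [pow_add, mul_assoc] at h
  have htu : t = r ^ d * u := mul_left_cancel₀ (pow_ne_zero _ hr.ne') h
  rcases d with _ | d
  · rfl
  have hr1 : r < 1 := by
    have := lt_of_le_of_lt ht.1 ht.2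
    rwa [one_lt_inv₀ hr] at this
  have : r ^ (d + 1) * u < 1 := calc
    r ^ (d + 1) * u ≤ r * u := by
      gcongr
      · linarith [hu.1]
      · exact pow_le_of_le_one hr.le hr1.le (by omega)
    _ < r * r⁻¹ := by gcongr; exact hu.2
    _ = 1 := mul_inv_cancel₀ hr.ne'
  linarith [ht.1]

section GoldenRatio

theorem goldenConj_sq_pos : 0 < ψ ^ 2 := pow_two_pos_of_ne_zero goldenConj_ne_zero

theorem goldenConj_pow_two_mul_pos (k : ℕ) : 0 < ψ ^ (2 * k) := by
  rw [pow_mul]; exact pow_pos goldenConj_sq_pos k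

theorem goldenConj_sq_lt_one : ψ ^ 2 < 1 := by
  nlinarith [goldenConj_neg, neg_one_lt_goldenConj]

theorem goldenConj_sq_mul_goldenRatio : ψ ^ 2 * φ = -ψ := by
  rw [sq, mul_assoc, goldenConj_mul_goldenRatio]; ring

theorem goldenRatio_sq_mul_goldenConj_sq : φ ^ 2 * ψ ^ 2 = 1 := by
  rw [← mul_pow, goldenRatio_mul_goldenConj]; norm_num

theorem inv_goldenConj_sq : (ψ ^ 2)⁻¹ = φ ^ 2 :=
  inv_eq_of_mul_eq_one_right (by rw [mul_comm, goldenRatio_sq_mul_goldenConj_sq])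

theorem Ico_one_goldenRatio_subset : Ico 1 φ ⊆ Ioo (-ψ) φ :=
  fun _ ht => ⟨by linarith [ht.1, neg_one_lt_goldenConj], ht.2⟩

theorem goldenConj_pow_mul_mem {d : ℕ} (hd : 2 ≤ d) {t : ℝ} (ht : t ∈ Ioo (-ψ) φ) :
    ψ ^ d * t ∈ Ioo (-ψ ^ 2) (-ψ) := by
  obtain ⟨ht₁, ht₂⟩ := ht
  have hψ := goldenConj_neg
  have hψ2 := goldenConj_sq
  have hψ2φ := goldenConj_sq_mul_goldenRatio
  obtain ⟨e, rfl | rfl⟩ := Nat.even_or_odd' d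
  all_goals obtain ⟨e, rfl⟩ : ∃ e', e = e' + 1 := ⟨e - 1, by omega⟩
  all_goals have hq : 0 < (ψ ^ 2) ^ (e + 1) := pow_pos goldenConj_sq_pos _
  all_goals have hq' : (ψ ^ 2) ^ (e + 1) ≤ ψ ^ 2 :=
    pow_le_of_le_one goldenConj_sq_pos.le goldenConj_sq_lt_one.le (by omega)
  · rw [pow_mul]
    have : (ψ ^ 2) ^ (e + 1) * t ≤ ψ ^ 2 * t := by nlinarith
    constructor <;> nlinarith
  · rw [pow_succ ψ (2 * (e + 1)), pow_mul, mul_assoc]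
    have hψt : ψ * t < 0 := by nlinarith
    have : ψ ^ 2 * (ψ * t) ≤ (ψ ^ 2) ^ (e + 1) * (ψ * t) := by nlinarith
    constructor <;> nlinarith

theorem eq_of_goldenConj_pow_mul_eq {i j : ℕ} {t u : ℝ} (ht : t ∈ Ioo (-ψ) φ)
    (hu : u ∈ Ioo (-ψ) φ) (h : ψ ^ i * t = ψ ^ j * u) : i = j := by
  wlog hij : i ≤ j generalizing i j t u
  · exact (this hu ht h.symm (by omega)).symm
  obtain ⟨d, rfl⟩ := Nat.exists_eq_add_of_le hij
  rw [pow_add, mul_assoc] at h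
  have htu : t = ψ ^ d * u := mul_left_cancel₀ (pow_ne_zero _ goldenConj_ne_zero) h
  match d, htu with
  | 0, _ => rfl
  | 1, htu => nlinarith [ht.1, hu.1, goldenConj_neg]
  | d + 2, htu => linarith [ht.1, (goldenConj_pow_mul_mem (d := d + 2) (by omega) hu).2]

theorem floor_mul_goldenRatio_eq_iff {m p : ℕ} (hm : 1 ≤ m) :
    ⌊((m : ℝ) - 1) * φ⌋₊ = p ↔ (m : ℝ) + p * ψ ∈ Ico 1 φ := by
  have hm' : (1 : ℝ) ≤ m := by exact_mod_cast hm
  have e₁ : ((m : ℝ) - 1) * φ - p = (m + p * ψ - 1) * φ := by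
    linear_combination -(p : ℝ) * goldenConj_mul_goldenRatio
  have e₂ : ((m : ℝ) - 1) * φ - (p + 1) = (m + p * ψ - φ) * φ := by
    linear_combination -(p : ℝ) * goldenConj_mul_goldenRatio + goldenRatio_sq
  have hφ := goldenRatio_pos
  rw [Nat.floor_eq_iff (by positivity), mem_Ico]
  constructor <;> rintro ⟨h₁, h₂⟩ <;> constructor <;> nlinarith

end GoldenRatio

section Fibonacci

theorem sum_mul_fib_add_one {ι : Type*} (s : Finset ι) (w : ι → ℝ) (e : ι → ℕ) :
    ∑ i ∈ s, w i * Nat.fib (e i + 1) =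
      φ * ∑ i ∈ s, w i * Nat.fib (e i) + ∑ i ∈ s, w i * ψ ^ e i := by
  rw [Finset.mul_sum, ← Finset.sum_add_distrib]
  refine Finset.sum_congr rfl fun i _ => ?_
  linear_combination w i * fib_succ_sub_goldenRatio_mul_fib (e i)

theorem mul_fib_add_one_add_mul_fib_add_two (a b : ℝ) (j : ℕ) :
    a * Nat.fib (j + 1) + b * Nat.fib (j + 2) =
      φ * (a * Nat.fib j + b * Nat.fib (j + 1)) + ψ ^ j * (a + b * ψ) := by
  linear_combination a * fib_succ_sub_goldenRatio_mul_fib j +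
    b * fib_succ_sub_goldenRatio_mul_fib (j + 1)

theorem fib_two_mul_add_one_sq (k : ℕ) :
    (Nat.fib (2 * k + 1) : ℤ) ^ 2 = Nat.fib (2 * k) * Nat.fib (2 * k + 2) + 1 := by
  have h := Int.fib_succ_mul_fib_pred_sub_fib_sq (2 * k + 1 : ℕ)
  rw [show ((2 * k + 1 : ℕ) : ℤ) + 1 = (2 * k + 2 : ℕ) by push_cast; ring,
    show ((2 * k + 1 : ℕ) : ℤ) - 1 = (2 * k : ℕ) by push_cast; ring] at h
  simp only [Int.fib_natCast, Int.natAbs_natCast, Odd.neg_one_pow ⟨k, rfl⟩] at h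
  linarith

theorem exists_int_eq_fib_two_mul_comb (k : ℕ) (n M : ℤ) :
    ∃ a b : ℤ, n = a * Nat.fib (2 * k) + b * Nat.fib (2 * k + 1) ∧
      M = a * Nat.fib (2 * k + 1) + b * Nat.fib (2 * k + 2) :=
  ⟨Nat.fib (2 * k + 1) * M - Nat.fib (2 * k + 2) * n, Nat.fib (2 * k + 1) * n - Nat.fib (2 * k) * M,
    by linear_combination (-n) * fib_two_mul_add_one_sq k,
    by linear_combination (-M) * fib_two_mul_add_one_sq k⟩

end Fibonacci

section Zeckendorf

theorem exists_isZeck (n : ℕ) : ∃ s, IsZeck n s := by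
  have : Trans (fun a b : ℕ => b + 2 ≤ a) (fun a b => b + 2 ≤ a) (fun a b => b + 2 ≤ a) :=
    ⟨fun h₁ h₂ => by omega⟩
  have : Std.Symm fun a b : ℕ => a ≠ b + 1 ∧ b ≠ a + 1 := ⟨fun _ _ h => h.symm⟩
  obtain ⟨hl, -, hl0⟩ := List.pairwise_append.mp (Nat.isZeckendorfRep_zeckendorf n).pairwise
  have hnodup : n.zeckendorf.Nodup := hl.imp fun h => by omega
  have hfar : n.zeckendorf.Pairwise fun a b => a ≠ b + 1 ∧ b ≠ a + 1 := hl.imp fun h => by omega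
  refine ⟨n.zeckendorf.toFinset, fun i hi => ?_, fun i hi hi' => ?_, ?_⟩
  · simpa using hl0 i (List.mem_toFinset.mp hi) 0
  · exact (hfar.forall (List.mem_toFinset.mp hi) (List.mem_toFinset.mp hi') (by omega)).2 rfl
  · rw [List.sum_toFinset _ hnodup, Nat.sum_zeckendorf_fib]

theorem exists_sum_goldenConj_pow_eq {s : Finset ℕ} (hs : ∀ i ∈ s, i + 1 ∉ s) {j : ℕ}
    (hj : IsLeast (s : Set ℕ) j) : ∃ t ∈ Ioo (-ψ) φ, ∑ i ∈ s, ψ ^ i = ψ ^ j * t := by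
  induction s using Finset.induction_on_min generalizing j with
  | empty => exact absurd hj.1 (by simp)
  | insert a s ha ih =>
    obtain rfl : j = a := by
      rcases Finset.mem_insert.mp hj.1 with h | h
      · exact h
      · exact absurd (hj.2 (Finset.mem_insert_self a s)) (ha j h).not_ge
    rw [Finset.sum_insert fun h => (ha j h).false]
    rcases s.eq_empty_or_nonempty with rfl | hne
    · exact ⟨1, Ico_one_goldenRatio_subset ⟨le_rfl, one_lt_goldenRatio⟩, by simp⟩
    obtain ⟨t, ht, hsum⟩ := ih (fun i hi hi' => hs i (by simp [hi]) (by simp [hi']))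
      (Finset.isLeast_min' s hne)
    have hgap : j + 2 ≤ s.min' hne := by
      have h₁ := ha _ (s.min'_mem hne)
      have h₂ : s.min' hne ≠ j + 1 := fun h =>
        hs j (Finset.mem_insert_self j s) (Finset.mem_insert_of_mem (h ▸ s.min'_mem hne))
      omega
    have hmem := goldenConj_pow_mul_mem (d := s.min' hne - j) (by omega) ht
    refine ⟨1 + ψ ^ (s.min' hne - j) * t, ⟨?_, ?_⟩, ?_⟩
    · linarith [hmem.1, goldenConj_sq]
    · linarith [hmem.2, one_sub_goldenConj]
    · rw [hsum, mul_add, ← mul_assoc, ← pow_add, Nat.add_sub_cancel' (by omega), mul_one]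

end Zeckendorf

section ChungGraham

theorem isCG_add_single {r J d : ℕ} {c : ℕ →₀ ℕ} (hc : IsCG r c) (hJ : ∀ i, J < i → c i = 0)
    (hd : d ≤ 2) (hcd : d = 2 → ∀ i, c i = 2 → ∃ l, i < l ∧ l ≤ J ∧ c l = 0) :
    IsCG (r + d * Nat.fib (2 * J + 2)) (c + Finsupp.single (J + 1) d) := by
  obtain ⟨hc2, hc0, hsep, hsum⟩ := hc
  have happ (i : ℕ) (hi : i ≠ J + 1) : (c + Finsupp.single (J + 1) d) i = c i := by
    simp [hi.symm]
  have hJ1 : (c + Finsupp.single (J + 1) d) (J + 1) = d := by simp [hJ (J + 1) (by omega)]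
  refine ⟨fun i => ?_, by rw [happ 0 (by omega), hc0], fun i₁ i₂ hi h₁ h₂ => ?_, ?_⟩
  · rcases eq_or_ne i (J + 1) with rfl | hi
    · rwa [hJ1]
    · rw [happ i hi]; exact hc2 i
  · have hi₁ : i₁ ≠ J + 1 := fun h => by
      subst h; rw [happ i₂ (by omega), hJ i₂ (by omega)] at h₂; omega
    rw [happ i₁ hi₁] at h₁
    rcases eq_or_ne i₂ (J + 1) with rfl | hi₂
    · obtain ⟨l, hl₁, hl₂, hl₃⟩ := hcd (by rwa [hJ1] at h₂) i₁ h₁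
      exact ⟨l, hl₁, by omega, by rwa [happ l (by omega)]⟩
    · rw [happ i₂ hi₂] at h₂
      have : i₂ ≤ J := by by_contra! h; rw [hJ i₂ h] at h₂; omega
      obtain ⟨l, hl₁, hl₂, hl₃⟩ := hsep i₁ i₂ hi h₁ h₂
      exact ⟨l, hl₁, hl₂, by rwa [happ l (by omega)]⟩
  · rw [Finsupp.sum_add_index' (by simp) (by intros; ring), Finsupp.sum_single_index (by simp),
      ← hsum, show 2 * (J + 1) = 2 * J + 2 by ring]

theorem exists_zero_of_add_single {J d : ℕ} {c : ℕ →₀ ℕ} (hJ : ∀ i, J < i → c i = 0)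
    (hd : d ≤ 1) (hcd : d = 1 → ∀ i, c i = 2 → ∃ l, i < l ∧ l ≤ J ∧ c l = 0) (i : ℕ)
    (hi : (c + Finsupp.single (J + 1) d) i = 2) :
    ∃ l, i < l ∧ l ≤ J + 1 ∧ (c + Finsupp.single (J + 1) d) l = 0 := by
  have happ (l : ℕ) (hl : l ≠ J + 1) : (c + Finsupp.single (J + 1) d) l = c l := by
    simp [hl.symm]
  have hi' : i ≠ J + 1 := by
    rintro rfl
    simp only [Finsupp.add_apply, Finsupp.single_eq_same, hJ (J + 1) (by omega)] at hi
    omega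
  rw [happ i hi'] at hi
  have : i ≤ J := by by_contra! h; rw [hJ i h] at hi; omega
  rcases Nat.lt_or_ge d 1 with hd0 | hd1
  · exact ⟨J + 1, by omega, le_rfl, by simp [show d = 0 by omega, hJ (J + 1) (by omega)]⟩
  · obtain ⟨l, hl₁, hl₂, hl₃⟩ := hcd (by omega) i hi
    exact ⟨l, hl₁, by omega, by rwa [happ l (by omega)]⟩

/-- The last clause is the invariant that allows a leading digit `2` at `J + 1`. -/
theorem exists_isCG_of_lt_fib (J : ℕ) : ∀ n < Nat.fib (2 * J + 2), ∃ c : ℕ →₀ ℕ, IsCG n c ∧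
    (∀ i, J < i → c i = 0) ∧
    (n < Nat.fib (2 * J + 1) → ∀ i, c i = 2 → ∃ l, i < l ∧ l ≤ J ∧ c l = 0) := by
  induction J with
  | zero =>
    intro n hn
    obtain rfl : n = 0 := by simpa using hn
    exact ⟨0, ⟨by simp, rfl, by simp, by simp⟩, by simp, by simp⟩
  | succ J ih =>
    intro n hn
    rw [show 2 * (J + 1) + 2 = 2 * J + 4 by ring] at hn
    rw [show 2 * (J + 1) + 1 = 2 * J + 3 by ring]
    have h₄ : Nat.fib (2 * J + 4) = Nat.fib (2 * J + 2) + Nat.fib (2 * J + 3) := Nat.fib_add_two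
    have h₃ : Nat.fib (2 * J + 3) = Nat.fib (2 * J + 1) + Nat.fib (2 * J + 2) := Nat.fib_add_two
    have h₁ : Nat.fib (2 * J + 1) ≤ Nat.fib (2 * J + 2) := Nat.fib_mono (by omega)
    have hpos : 0 < Nat.fib (2 * J + 2) := Nat.fib_pos.mpr (by omega)
    obtain ⟨d, r, rfl, hr⟩ : ∃ d r, n = r + d * Nat.fib (2 * J + 2) ∧ r < Nat.fib (2 * J + 2) :=
      ⟨_, _, by rw [add_comm, mul_comm, Nat.div_add_mod], Nat.mod_lt _ hpos⟩
    have hmul (e : ℕ) (he : e ≤ d) : e * Nat.fib (2 * J + 2) ≤ d * Nat.fib (2 * J + 2) :=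
      Nat.mul_le_mul_right _ he
    have hd : d ≤ 2 := by by_contra! h; have := hmul 3 (by omega); omega
    obtain ⟨c, hc, hJ, hcd⟩ := ih r hr
    refine ⟨c + Finsupp.single (J + 1) d,
      isCG_add_single hc hJ hd fun h => hcd (by subst h; omega),
      fun i hi => by simp [hJ i (by omega), show J + 1 ≠ i by omega], fun hlt => ?_⟩
    have hd1 : d ≤ 1 := by by_contra! h; have := hmul 2 (by omega); omega
    exact exists_zero_of_add_single hJ hd1 fun h => hcd (by subst h; omega)

theorem exists_isCG (n : ℕ) : ∃ c, IsCG n c := by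
  have h₁ : n + 1 ≤ Nat.fib (n + 2) := by have := Nat.le_fib_add_one (n + 2); omega
  have h₂ : Nat.fib (n + 2) ≤ Nat.fib (2 * n + 2) := Nat.fib_mono (by omega)
  obtain ⟨c, hc, -⟩ := exists_isCG_of_lt_fib n n (by omega)
  exact ⟨c, hc⟩

/-- The second bound is the induction hypothesis needed after a digit `2`. -/
theorem sum_Ico_mul_goldenConj_pow_two_mul_lt {c : ℕ → ℕ} (hc : ∀ i, c i ≤ 2)
    (hsep : ∀ i₁ i₂, i₁ < i₂ → c i₁ = 2 → c i₂ = 2 → ∃ j, i₁ < j ∧ j < i₂ ∧ c j = 0)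
    (N k : ℕ) :
    ∑ i ∈ Finset.Ico k N, (c i : ℝ) * ψ ^ (2 * i) < φ ^ 2 * ψ ^ (2 * k) ∧
      ((∀ j, k ≤ j → c j = 2 → ∃ l, k ≤ l ∧ l < j ∧ c l = 0) →
        ∑ i ∈ Finset.Ico k N, (c i : ℝ) * ψ ^ (2 * i) < φ * ψ ^ (2 * k)) := by
  have hX := goldenConj_pow_two_mul_pos k
  induction hd : N - k generalizing k with
  | zero =>
    rw [Finset.Ico_eq_empty (by omega), Finset.sum_empty]
    exact ⟨by positivity, fun _ => by positivity⟩
  | succ d ih =>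
    rw [Finset.sum_eq_sum_Ico_succ_bot (by omega)]
    obtain ⟨ihP, ihQ⟩ := ih (k + 1) (goldenConj_pow_two_mul_pos _) (by omega)
    have hshift : ψ ^ (2 * (k + 1)) = ψ ^ 2 * ψ ^ (2 * k) := by ring
    have hP : φ ^ 2 * (ψ ^ 2 * ψ ^ (2 * k)) = ψ ^ (2 * k) := by
      rw [← mul_assoc, goldenRatio_sq_mul_goldenConj_sq, one_mul]
    have hQ : φ * (ψ ^ 2 * ψ ^ (2 * k)) = -ψ * ψ ^ (2 * k) := by
      rw [← mul_assoc, mul_comm φ, goldenConj_sq_mul_goldenRatio]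
    rw [hshift, hP] at ihP
    rw [hshift, hQ] at ihQ
    have hφ2 := goldenRatio_sq
    have hφψ := goldenRatio_add_goldenConj
    have hφ := one_lt_goldenRatio
    have hck := hc k
    interval_cases h : c k
    · exact ⟨by push_cast; nlinarith, fun _ => by push_cast; nlinarith⟩
    · refine ⟨by push_cast; nlinarith, fun hz => ?_⟩
      have := ihQ fun j hj hcj => by
        obtain ⟨l, hl₁, hl₂, hl₃⟩ := hz j (by omega) hcj
        exact ⟨l, Nat.lt_of_le_of_ne hl₁ (by rintro rfl; omega), hl₂, hl₃⟩
      push_cast; nlinarith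
    · refine ⟨?_, fun hz => ?_⟩
      · have := ihQ fun j hj hcj => by
          obtain ⟨l, hl₁, hl₂, hl₃⟩ := hsep k j (by omega) h hcj
          exact ⟨l, by omega, hl₂, hl₃⟩
        push_cast; nlinarith
      · obtain ⟨l, hl₁, hl₂, -⟩ := hz k le_rfl h
        omega

theorem exists_sum_mul_goldenConj_pow_two_mul_eq {n k : ℕ} {c : ℕ →₀ ℕ} (hc : IsCG n c)
    (hk : 1 ≤ c k) (hlow : ∀ i < k, c i = 0) :
    ∃ t ∈ Ico 1 (φ ^ 2), ∑ i ∈ c.support, (c i : ℝ) * ψ ^ (2 * i) = ψ ^ (2 * k) * t := by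
  have hX := goldenConj_pow_two_mul_pos k
  set S := ∑ i ∈ c.support, (c i : ℝ) * ψ ^ (2 * i)
  have hlo : ψ ^ (2 * k) ≤ S := calc
    ψ ^ (2 * k) ≤ (c k : ℝ) * ψ ^ (2 * k) := le_mul_of_one_le_left hX.le (by exact_mod_cast hk)
    _ ≤ S := Finset.single_le_sum (f := fun i => (c i : ℝ) * ψ ^ (2 * i))
      (fun i _ => by rw [pow_mul]; positivity) (Finsupp.mem_support_iff.mpr (by omega))
  have hsub : c.support ⊆ Finset.Ico k (c.support.sup id + 1) := fun i hi => by
    have := Finset.le_sup (f := id) hi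
    have : k ≤ i := by by_contra! h; exact Finsupp.mem_support_iff.mp hi (hlow i h)
    simp only [Finset.mem_Ico]; simp only [id] at *; omega
  have hhi : S < φ ^ 2 * ψ ^ (2 * k) := by
    rw [show S = _ from Finset.sum_subset hsub fun i _ hi => by
      simp [Finsupp.notMem_support_iff.mp hi]]
    exact (sum_Ico_mul_goldenConj_pow_two_mul_lt hc.1 hc.2.2.1 _ k).1
  refine ⟨S / ψ ^ (2 * k), ⟨?_, ?_⟩, by field_simp⟩
  · rwa [le_div_iff₀ hX, one_mul]
  · rwa [div_lt_iff₀ hX]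

end ChungGraham

section GoldenGap

noncomputable def goldenGap (n : ℕ) : ℝ := Int.fract (-(φ * n))

@[simp]
theorem goldenGap_zero : goldenGap 0 = 0 := by simp [goldenGap]

theorem goldenGap_eq_of_abs_sub_lt_one {n : ℕ} {L : ℤ} {D : ℝ} (hL : (L : ℝ) = φ * n + D)
    (hD : |D - goldenGap n| < 1) : goldenGap n = D := by
  have hz : ((L + ⌊-(φ * n)⌋ : ℤ) : ℝ) = D - goldenGap n := by
    rw [goldenGap, Int.fract]; push_cast; linarith
  have : L + ⌊-(φ * n)⌋ = 0 := Int.abs_lt_one_iff.mp (by rw [← hz] at hD; exact_mod_cast hD)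
  rw [this, Int.cast_zero] at hz
  linarith

theorem abs_sub_goldenGap_lt_one {n : ℕ} {D : ℝ} (h₀ : 0 ≤ D) (h₁ : D < 1) :
    |D - goldenGap n| < 1 := by
  have := Int.fract_nonneg (-(φ * n))
  have := Int.fract_lt_one (-(φ * n))
  rw [abs_sub_lt_iff, goldenGap]; constructor <;> linarith

theorem IsZeck.goldenGap_eq {n : ℕ} {s : Finset ℕ} (hs : IsZeck n s)
    (h : |∑ i ∈ s, ψ ^ i - goldenGap n| < 1) : goldenGap n = ∑ i ∈ s, ψ ^ i := by
  refine goldenGap_eq_of_abs_sub_lt_one (L := ∑ i ∈ s, Nat.fib (i + 1)) ?_ h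
  have := sum_mul_fib_add_one s 1 id
  simp only [Pi.one_apply, one_mul, id] at this
  push_cast; rw [this, hs.2.2]; push_cast; rfl

theorem IsCG.goldenGap_eq {n : ℕ} {c : ℕ →₀ ℕ} (hc : IsCG n c)
    (h : |∑ i ∈ c.support, (c i : ℝ) * ψ ^ (2 * i) - goldenGap n| < 1) :
    goldenGap n = ∑ i ∈ c.support, (c i : ℝ) * ψ ^ (2 * i) := by
  refine goldenGap_eq_of_abs_sub_lt_one (L := ∑ i ∈ c.support, c i * Nat.fib (2 * i + 1)) ?_ h
  have := sum_mul_fib_add_one c.support (fun i => (c i : ℝ)) (fun i => 2 * i)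
  push_cast; rw [this, hc.2.2.2, Finsupp.sum]; push_cast; rfl

theorem exists_goldenGap_eq_of_zeckMin {k n : ℕ} (hk : 1 ≤ k) (h : ZeckMin k n) :
    ∃ t ∈ Ioo (-ψ) φ, goldenGap n = ψ ^ (2 * k) * t := by
  obtain ⟨s, hs, hks, hmin⟩ := h
  obtain ⟨t, ht, hsum⟩ := exists_sum_goldenConj_pow_eq hs.2.1 ⟨hks, hmin⟩
  have hX := goldenConj_pow_two_mul_pos k
  have := (goldenConj_pow_mul_mem (d := 2 * k) (by omega) ht).2
  refine ⟨t, ht, hsum ▸ hs.goldenGap_eq (hsum ▸ abs_sub_goldenGap_lt_one ?_ ?_)⟩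
  · nlinarith [ht.1, goldenConj_neg]
  · linarith [neg_one_lt_goldenConj]

theorem exists_goldenGap_eq_of_isCG {n k : ℕ} {c : ℕ →₀ ℕ} (hc : IsCG n c) (hk : 1 ≤ c k)
    (hlow : ∀ i < k, c i = 0) : ∃ t ∈ Ico 1 (φ ^ 2), goldenGap n = ψ ^ (2 * k) * t := by
  obtain ⟨t, ht, hsum⟩ := exists_sum_mul_goldenConj_pow_two_mul_eq hc hk hlow
  have hk0 : k ≠ 0 := by rintro rfl; rw [hc.2.1] at hk; omega
  have hX := goldenConj_pow_two_mul_pos k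
  have hX' : ψ ^ (2 * k) ≤ ψ ^ 2 := by
    rw [pow_mul]; exact pow_le_of_le_one goldenConj_sq_pos.le goldenConj_sq_lt_one.le hk0
  refine ⟨t, ht, hsum ▸ hc.goldenGap_eq (hsum ▸ abs_sub_goldenGap_lt_one ?_ ?_)⟩
  · nlinarith [ht.1]
  · nlinarith [ht.2, goldenRatio_sq_mul_goldenConj_sq]

theorem cgMin_of_goldenGap_eq {k n : ℕ} {t : ℝ} (ht : t ∈ Ico 1 (φ ^ 2))
    (h : goldenGap n = ψ ^ (2 * k) * t) : CGMin k n := by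
  obtain ⟨c, hc⟩ := exists_isCG n
  have hne : c.support.Nonempty := by
    rw [Finset.nonempty_iff_ne_empty]
    intro hemp
    obtain rfl : n = 0 := by rw [hc.2.2.2, Finsupp.sum, hemp, Finset.sum_empty]
    nlinarith [ht.1, goldenConj_pow_two_mul_pos k, goldenGap_zero]
  set j := c.support.min' hne
  have hj : 1 ≤ c j :=
    Nat.one_le_iff_ne_zero.mpr (Finsupp.mem_support_iff.mp (c.support.min'_mem hne))
  have hlow : ∀ i < j, c i = 0 := fun i hi =>
    Finsupp.notMem_support_iff.mp fun hmem => (c.support.min'_le i hmem).not_gt hi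
  obtain ⟨u, hu, hgap⟩ := exists_goldenGap_eq_of_isCG hc hj hlow
  have : j = k := by
    refine eq_of_pow_mul_eq_pow_mul goldenConj_sq_pos (inv_goldenConj_sq ▸ hu)
      (inv_goldenConj_sq ▸ ht) ?_
    rw [← pow_mul, ← pow_mul, ← hgap, h]
  exact ⟨c, hc, this ▸ hj, this ▸ hlow⟩

theorem zeckMin_of_goldenGap_eq {k n : ℕ} (hk : 1 ≤ k) {t : ℝ} (ht : t ∈ Ico 1 φ)
    (h : goldenGap n = ψ ^ (2 * k) * t) : ZeckMin k n := by
  obtain ⟨s, hs⟩ := exists_isZeck n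
  have hne : s.Nonempty := by
    rw [Finset.nonempty_iff_ne_empty]
    intro hemp
    obtain rfl : n = 0 := by rw [hs.2.2, hemp, Finset.sum_empty]
    nlinarith [ht.1, goldenConj_pow_two_mul_pos k, goldenGap_zero]
  obtain ⟨j, hj⟩ : ∃ j, IsLeast (s : Set ℕ) j := ⟨_, s.isLeast_min' hne⟩
  obtain ⟨u, hu, hsum⟩ := exists_sum_goldenConj_pow_eq hs.2.1 hj
  have hD := goldenConj_pow_mul_mem (hs.1 j hj.1) hu
  have hδ := goldenConj_pow_mul_mem (d := 2 * k) (by omega) (Ico_one_goldenRatio_subset ht)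
  have hgap : goldenGap n = ψ ^ j * u := by
    rw [← hsum]
    refine hs.goldenGap_eq ?_
    rw [hsum, h, abs_sub_lt_iff]
    constructor <;> linarith [hD.1, hD.2, hδ.1, hδ.2, goldenConj_sq]
  have : j = 2 * k :=
    eq_of_goldenConj_pow_mul_eq hu (Ico_one_goldenRatio_subset ht) (hgap.symm.trans h)
  exact ⟨s, hs, this ▸ hj.1, this ▸ hj.2⟩

theorem exists_goldenGap_eq_of_eq_fib {k m : ℕ} (hk : 1 ≤ k) (hm : 1 ≤ m) :
    ∃ t ∈ Ico 1 φ, goldenGap (m * Nat.fib (2 * k) + ⌊((m : ℝ) - 1) * φ⌋₊ * Nat.fib (2 * k + 1)) =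
      ψ ^ (2 * k) * t := by
  set p := ⌊((m : ℝ) - 1) * φ⌋₊
  have ht := (floor_mul_goldenRatio_eq_iff hm).mp rfl
  have := (goldenConj_pow_mul_mem (d := 2 * k) (by omega) (Ico_one_goldenRatio_subset ht)).2
  refine ⟨_, ht, goldenGap_eq_of_abs_sub_lt_one
    (L := m * Nat.fib (2 * k + 1) + p * Nat.fib (2 * k + 2)) ?_ (abs_sub_goldenGap_lt_one ?_ ?_)⟩
  · push_cast; exact mul_fib_add_one_add_mul_fib_add_two m p (2 * k)
  · nlinarith [ht.1, goldenConj_pow_two_mul_pos k]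
  · linarith [neg_one_lt_goldenConj]

theorem exists_eq_fib_of_goldenGap_eq {k n : ℕ} {t : ℝ} (ht : t ∈ Ico 1 φ)
    (h : goldenGap n = ψ ^ (2 * k) * t) :
    ∃ m : ℕ, 1 ≤ m ∧ n = m * Nat.fib (2 * k) + ⌊((m : ℝ) - 1) * φ⌋₊ * Nat.fib (2 * k + 1) := by
  have hM : ((-⌊-(φ * n)⌋ : ℤ) : ℝ) = φ * n + goldenGap n := by
    rw [goldenGap, Int.fract]; push_cast; ring
  obtain ⟨a, b, hn, hM'⟩ := exists_int_eq_fib_two_mul_comb k n (-⌊-(φ * n)⌋)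
  have hab : t = a + b * ψ := by
    have := mul_fib_add_one_add_mul_fib_add_two a b (2 * k)
    have hnR : (n : ℝ) = a * Nat.fib (2 * k) + b * Nat.fib (2 * k + 1) := by exact_mod_cast hn
    have hMR : ((-⌊-(φ * n)⌋ : ℤ) : ℝ) = a * Nat.fib (2 * k + 1) + b * Nat.fib (2 * k + 2) := by
      exact_mod_cast hM'
    rw [← hnR, ← hMR, hM, h] at this
    exact mul_left_cancel₀ (goldenConj_pow_two_mul_pos k).ne' (by linarith)
  have hF₁ : 1 ≤ Nat.fib (2 * k + 1) := Nat.fib_pos.mpr (by omega)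
  have hb : 0 ≤ b := by
    by_contra! hb
    have hbR : (b : ℝ) ≤ -1 := by exact_mod_cast (show b ≤ -1 by omega)
    have : (a : ℝ) < 1 := by nlinarith [ht.2, goldenRatio_add_goldenConj, goldenConj_neg]
    have ha : a ≤ 0 := by
      have : a < 1 := by exact_mod_cast this
      omega
    have : (0 : ℤ) ≤ Nat.fib (2 * k) := by positivity
    have : (1 : ℤ) ≤ Nat.fib (2 * k + 1) := by exact_mod_cast hF₁
    nlinarith [Int.natCast_nonneg n]
  have ha : 1 ≤ a := by
    have : (0 : ℝ) ≤ b := by exact_mod_cast hb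
    have : (1 : ℝ) ≤ a := by nlinarith [ht.1, goldenConj_neg]
    exact_mod_cast this
  lift a to ℕ using (by omega)
  lift b to ℕ using hb
  refine ⟨a, by omega, ?_⟩
  rw [(floor_mul_goldenRatio_eq_iff (by omega)).mpr (by rw [hab] at ht; exact_mod_cast ht)]
  exact_mod_cast hn

end GoldenGap

theorem overlap_set (k : ℕ) (hk : 1 ≤ k) :
    {n : ℕ | ZeckMin k n ∧ CGMin k n} =
      {x : ℕ | ∃ n : ℕ, 1 ≤ n ∧
        x = n * Nat.fib (2 * k) +
          ⌊((n : ℝ) - 1) * ((1 + Real.sqrt 5) / 2)⌋₊ * Nat.fib (2 * k + 1)} := by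
  ext n
  refine ⟨fun ⟨hZ, hC⟩ => ?_, fun ⟨m, hm, hn⟩ => ?_⟩
  · obtain ⟨u, hu, hZ⟩ := exists_goldenGap_eq_of_zeckMin hk hZ
    obtain ⟨c, hc, hck, hlow⟩ := hC
    obtain ⟨t, ht, hC⟩ := exists_goldenGap_eq_of_isCG hc hck hlow
    have hut : u = t := mul_left_cancel₀ (pow_ne_zero _ goldenConj_ne_zero) (hZ.symm.trans hC)
    exact exists_eq_fib_of_goldenGap_eq ⟨ht.1, hut ▸ hu.2⟩ hC
  · obtain ⟨t, ht, hgap⟩ := exists_goldenGap_eq_of_eq_fib hk hm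
    rw [← hn] at hgap
    have hφ : φ < φ ^ 2 := by rw [goldenRatio_sq]; linarith
    exact ⟨zeckMin_of_goldenGap_eq hk ht hgap, cgMin_of_goldenGap_eq ⟨ht.1, ht.2.trans hφ⟩ hgap⟩
end
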